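/- arXiv:1610.03465 — 5 statements merged into one kernel-verified Lean document; each statement's English description precedes it below -/
import Mathlib

section
/- For every integer k ≥ 1 and every x ∈ (0,1), one has φ_k(x) = (−1)^k · φ_k(1−x). -/
noncomputable section

open Finset

/-- The digamma function `ψ = Γ′/Γ`. -/
def digamma (x : ℝ) : ℝ := deriv Real.Gamma x / Real.Gamma x

/-- The function `φ_k` defined for `0 < x < 1` by
`φ_k(x) = −2 log x · Σ_{n=0}^{k−1} (−1)^n (Γ(k+n)/(Γ(k−n)(n!)²)) x^n
  − 2 Σ_{n=0}^{k−1} (−1)^n (Γ(k+n)/(Γ(k−n)(n!)²)) (−2ψ(n+1) + ψ(k+n) + ψ(k−n)) x^n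
  + 2(−1)^k Σ_{n=k}^{∞} (Γ(n+k) Γ(n−k+1) / Γ(n+1)²) x^n`
(the final infinite series is reindexed by `n = k + m`). -/
def phi (k : ℕ) (x : ℝ) : ℝ :=
  -2 * Real.log x * ∑ n ∈ Finset.range k,
      (-1 : ℝ) ^ n * (Real.Gamma ((k : ℝ) + n) /
        (Real.Gamma ((k : ℝ) - n) * ((Nat.factorial n : ℝ)) ^ 2)) * x ^ n
  - 2 * ∑ n ∈ Finset.range k,
      (-1 : ℝ) ^ n * (Real.Gamma ((k : ℝ) + n) /
        (Real.Gamma ((k : ℝ) - n) * ((Nat.factorial n : ℝ)) ^ 2)) *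
        (-2 * digamma ((n : ℝ) + 1) + digamma ((k : ℝ) + n) + digamma ((k : ℝ) - n)) * x ^ n
  + 2 * (-1 : ℝ) ^ k * ∑' m : ℕ,
      (Real.Gamma ((k : ℝ) + m + k) * Real.Gamma ((m : ℝ) + 1) /
        (Real.Gamma ((k : ℝ) + m + 1)) ^ 2) * x ^ (k + m)


/-- Harmonic number -/
def Hh (n : ℕ) : ℝ := ∑ i ∈ range n, (1:ℝ)/(i+1)

lemma Hh_succ (n : ℕ) : Hh (n+1) = Hh n + 1/((n:ℝ)+1) := by
  simp [Hh, Finset.sum_range_succ]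

/-- Legendre coefficients -/
def pc (l n : ℕ) : ℝ :=
  if n ≤ l then (-1:ℝ)^n * (Nat.factorial (l+n)) / (Nat.factorial (l-n) * (Nat.factorial n)^2)
  else 0

lemma pc_zero (l : ℕ) : pc l 0 = 1 := by
  have : (Nat.factorial l : ℝ) ≠ 0 := by positivity
  simp [pc, div_self, this]

lemma pc_ne_zero (l n : ℕ) (h : n ≤ l) : pc l n ≠ 0 := by
  rw [pc, if_pos h]
  have h1 : (0:ℝ) < (Nat.factorial (l+n) : ℝ) := by positivity
  have h2 : (0:ℝ) < (Nat.factorial (l-n) : ℝ) * (Nat.factorial n : ℝ)^2 := by positivity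
  have h0 : (-1:ℝ)^n * (Nat.factorial (l+n)) ≠ 0 := by
    apply mul_ne_zero (pow_ne_zero n (by norm_num)) h1.ne'
  exact div_ne_zero h0 h2.ne'

lemma pc_eq_zero (l n : ℕ) (h : l < n) : pc l n = 0 := by
  rw [pc, if_neg (by omega)]

lemma pc_rec (l n : ℕ) :
    ((n:ℝ)+1)^2 * pc l (n+1) = ((n:ℝ)*((n:ℝ)+1) - (l:ℝ)*((l:ℝ)+1)) * pc l n := by
  rcases lt_trichotomy n l with h | h | h
  · rw [pc, if_pos (by omega), pc, if_pos (by omega)]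
    have e1 : l + (n+1) = (l+n) + 1 := by omega
    have e2 : l - n = (l - (n+1)) + 1 := by omega
    rw [e1, Nat.factorial_succ]
    have e3 : Nat.factorial (l-n) = (l-n) * Nat.factorial (l-(n+1)) := by
      conv_lhs => rw [e2]
      rw [Nat.factorial_succ]
      congr 1
      omega
    rw [e3]
    rw [Nat.factorial_succ]
    have c1 : ((l:ℝ)+n+1) ≠ 0 := by positivity
    have c2 : ((l-n : ℕ):ℝ) = (l:ℝ) - n := by
      rw [Nat.cast_sub h.le]
    have f1 : (Nat.factorial (l-(n+1)) : ℝ) ≠ 0 := by positivity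
    have f2 : (Nat.factorial n : ℝ) ≠ 0 := by positivity
    have f3 : ((l:ℝ) - n) ≠ 0 := by
      have : (n:ℝ) < l := by exact_mod_cast h
      linarith
    push_cast [c2]
    field_simp
    ring
  · subst h
    rw [pc_eq_zero n (n+1) (by omega)]
    have : ((n:ℝ)*((n:ℝ)+1) - (n:ℝ)*((n:ℝ)+1)) = 0 := by ring
    rw [this]
    ring
  · rw [pc_eq_zero l (n+1) (by omega), pc_eq_zero l n h]
    ring

/-- Master telescoping identity. -/
lemma sum_master (l : ℕ) (ν : ℝ) (m : ℕ)
    (h : ∀ j : ℕ, j < m → ν - j ≠ 0 ∧ ν + 1 - j ≠ 0) :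
    (ν+1)^2 * ∑ j ∈ range m, pc l j / (ν+1-j)
      + ((l:ℝ)*((l:ℝ)+1) - ν*(ν+1)) * ∑ j ∈ range m, pc l j / (ν-j)
    = - pc l m * m^2 / (ν+1-m) := by
  have key : ∀ j : ℕ, j < m →
      (ν+1)^2 * (pc l j / (ν+1-j)) + ((l:ℝ)*((l:ℝ)+1) - ν*(ν+1)) * (pc l j / (ν-j))
      = (pc l j * j^2 / (ν+1-j)) - (pc l (j+1) * ((j:ℝ)+1)^2 / (ν+1-((j:ℝ)+1))) := by
    intro j hj
    obtain ⟨h1, h2⟩ := h j hj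
    have hrec := pc_rec l j
    have h3 : ν + 1 - ((j:ℝ)+1) = ν - j := by ring
    have hj1 : ((j:ℝ)+1)^2 ≠ 0 := by positivity
    have hp : pc l (j+1) = (((j:ℝ)*((j:ℝ)+1) - (l:ℝ)*((l:ℝ)+1)) * pc l j) / (((j:ℝ)+1)^2) := by
      rw [eq_div_iff hj1]
      linarith [pc_rec l j]
    rw [h3, hp]
    field_simp
    ring
  calc (ν+1)^2 * ∑ j ∈ range m, pc l j / (ν+1-j)
      + ((l:ℝ)*((l:ℝ)+1) - ν*(ν+1)) * ∑ j ∈ range m, pc l j / (ν-j)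
      = ∑ j ∈ range m, ((ν+1)^2 * (pc l j / (ν+1-j))
          + ((l:ℝ)*((l:ℝ)+1) - ν*(ν+1)) * (pc l j / (ν-j))) := by
        rw [Finset.mul_sum, Finset.mul_sum, ← Finset.sum_add_distrib]
    _ = ∑ j ∈ range m, ((fun j : ℕ => pc l j * (j:ℝ)^2 / (ν+1-j)) j
          - (fun j : ℕ => pc l j * (j:ℝ)^2 / (ν+1-j)) (j+1)) := by
        apply Finset.sum_congr rfl
        intro j hj
        have := key j (Finset.mem_range.1 hj)
        simpa using this
    _ = - pc l m * m^2 / (ν+1-m) := by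
        rw [Finset.sum_range_sub' (fun j : ℕ => pc l j * (j:ℝ)^2 / (ν+1-j)) m]
        simp
        ring

/-- The weight in the closed form for the partial-fraction sums. -/
def wc (l n : ℕ) : ℝ := Hh (l+n) + Hh (l-n) - 2 * Hh l

lemma wc_zero (l : ℕ) : wc l 0 = 0 := by simp [wc]; ring

/-- F0 : recurrence for partial sums of partial fractions. -/
lemma F0 (l n : ℕ) :
    ((n:ℝ)+1)^2 * ∑ j ∈ range (n+1), pc l j / ((n:ℝ)+1-j)
    = (2*(n:ℝ)+1) * pc l n
      - ((l:ℝ)*((l:ℝ)+1) - (n:ℝ)*((n:ℝ)+1)) * ∑ j ∈ range n, pc l j / ((n:ℝ)-j) := by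
  have h := sum_master l (n:ℝ) n (by
    intro j hj
    have hj' : (j:ℝ) < n := by exact_mod_cast hj
    constructor <;> intro hc <;> nlinarith)
  rw [Finset.sum_range_succ]
  have e : ((n:ℝ)+1-(n:ℕ)) = 1 := by push_cast; ring
  rw [e] at h ⊢
  -- h : (n+1)^2 * Σ_{j<n} pc/(n+1-j) + (l(l+1)-n(n+1)) Σ_{j<n} pc/(n-j) = -pc n * n^2 / 1
  have : ((n:ℝ)+1)^2 * (∑ j ∈ range n, pc l j / ((n:ℝ)+1-j) + pc l n / 1)
      = ((n:ℝ)+1)^2 * ∑ j ∈ range n, pc l j / ((n:ℝ)+1-j) + ((n:ℝ)+1)^2 * pc l n := by ring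
  rw [this]
  have h2 : ((n:ℝ)+1)^2 * ∑ j ∈ range n, pc l j / ((n:ℝ)+1-j)
      = - pc l n * (n:ℝ)^2 / 1 - ((l:ℝ)*((l:ℝ)+1) - (n:ℝ)*((n:ℝ)+1)) * ∑ j ∈ range n, pc l j / ((n:ℝ)-j) := by
    linarith [h]
  rw [h2]
  ring

/-- F1 : closed form for the inner partial-fraction sums. -/
lemma F1 (l : ℕ) : ∀ n, n ≤ l → ∑ j ∈ range n, pc l j / ((n:ℝ)-j) = pc l n * wc l n := by
  intro n
  induction n with
  | zero => intro _; simp [wc_zero]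
  | succ n ih =>
    intro hn1
    have hn : n < l := by omega
    have hs := ih (by omega)
    have h0 := F0 l n
    rw [hs] at h0
    have ecast : (((n+1):ℕ):ℝ) = (n:ℝ)+1 := by push_cast; ring
    rw [ecast]
    have d1 : ((l:ℝ)+n+1) ≠ 0 := by positivity
    have hnl : (n:ℝ) < l := by exact_mod_cast hn
    have d2 : ((l:ℝ)-n) ≠ 0 := by linarith
    have ew : wc l (n+1) = wc l n + 1/((l:ℝ)+n+1) - 1/((l:ℝ)-n) := by
      unfold wc
      have e1 : l + (n+1) = (l+n) + 1 := by omega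
      have e2 : l - n = (l - (n+1)) + 1 := by omega
      have e4 : (((l-(n+1)):ℕ):ℝ) + 1 = (l:ℝ) - n := by
        rw [Nat.cast_sub (by omega)]
        push_cast
        ring
      have e3 : Hh (l-n) = Hh (l-(n+1)) + 1/((l:ℝ)-n) := by
        conv_lhs => rw [e2]
        rw [Hh_succ, e4]
      have e5 : ((l+n:ℕ):ℝ) + 1 = (l:ℝ)+n+1 := by push_cast; ring
      have e6 : Hh (l-(n+1)) = Hh (l-n) - 1/((l:ℝ)-n) := by rw [e3]; ring
      rw [e1, Hh_succ, e5, e6]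
      ring
    have key : ((n:ℝ)+1)^2 * (pc l (n+1) * wc l (n+1))
        = (2*(n:ℝ)+1) * pc l n
          - ((l:ℝ)*((l:ℝ)+1) - (n:ℝ)*((n:ℝ)+1)) * (pc l n * wc l n) := by
      have h1 : ((n:ℝ)+1)^2 * (pc l (n+1) * wc l (n+1))
          = (((n:ℝ)*((n:ℝ)+1) - (l:ℝ)*((l:ℝ)+1)) * pc l n) * wc l (n+1) := by
        rw [← pc_rec]; ring
      rw [h1, ew]
      field_simp
      ring
    have hne : ((n:ℝ)+1)^2 ≠ 0 := by positivity
    apply mul_left_cancel₀ hne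
    rw [key, h0]

/-- The tail coefficients. -/
def av (l n : ℕ) : ℝ :=
  (Nat.factorial (n+l) : ℝ) * (Nat.factorial (n-(l+1)) : ℝ) / ((Nat.factorial n : ℝ))^2

/-- F2 : partial fractions formula for the tail coefficients. -/
lemma F2 (l : ℕ) : ∀ n, l+1 ≤ n → ∑ j ∈ range (l+1), pc l j / ((n:ℝ)-j) = (-1)^l * av l n := by
  intro n hn
  induction n, hn using Nat.le_induction with
  | base =>
    have h0 := F0 l l
    rw [show (l:ℝ)*((l:ℝ)+1) - (l:ℝ)*((l:ℝ)+1) = 0 by ring, zero_mul, sub_zero] at h0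
    have ecast : (((l+1):ℕ):ℝ) = (l:ℝ)+1 := by push_cast; ring
    rw [ecast]
    have hne : ((l:ℝ)+1)^2 ≠ 0 := by positivity
    apply mul_left_cancel₀ hne
    rw [h0]
    -- (2l+1) pc l l = (l+1)^2 * ((-1)^l * av l (l+1))
    unfold av pc
    rw [if_pos le_rfl]
    have e1 : l + 1 + l = (l+l) + 1 := by omega
    have e2 : l + 1 - (l+1) = 0 := by omega
    have e3 : l - l = 0 := by omega
    rw [e1, e2, e3, Nat.factorial_succ, Nat.factorial_succ, Nat.factorial_zero]
    have f2 : (Nat.factorial l : ℝ) ≠ 0 := by positivity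
    push_cast
    field_simp
    ring
  | succ n hn ih =>
    have hm := sum_master l (n:ℝ) (l+1) (by
      intro j hj
      have h1 : (j:ℝ) < n := by
        have : j < n := by omega
        exact_mod_cast this
      constructor <;> intro hc <;> nlinarith)
    rw [pc_eq_zero l (l+1) (by omega)] at hm
    have ecast : (((n+1):ℕ):ℝ) = (n:ℝ)+1 := by push_cast; ring
    rw [ecast]
    have hne : ((n:ℝ)+1)^2 ≠ 0 := by positivity
    apply mul_left_cancel₀ hne
    have hsum : ((n:ℝ)+1)^2 * ∑ j ∈ range (l+1), pc l j / ((n:ℝ)+1-j)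
        = - ((l:ℝ)*((l:ℝ)+1) - (n:ℝ)*((n:ℝ)+1)) * ((-1)^l * av l n) := by
      norm_num at hm
      rw [ih] at hm
      linarith
    rw [hsum]
    -- now pure: -(l(l+1)-n(n+1)) * ((-1)^l av n) = (n+1)^2 * ((-1)^l * av (n+1))
    unfold av
    have e1 : n + 1 + l = (n+l) + 1 := by omega
    have e2 : n + 1 - (l+1) = (n - (l+1)) + 1 := by omega
    rw [e1, e2, Nat.factorial_succ, Nat.factorial_succ, Nat.factorial_succ]
    have c2 : ((n - (l+1) : ℕ):ℝ) = (n:ℝ) - (l:ℝ) - 1 := by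
      rw [Nat.cast_sub (by omega)]
      push_cast
      ring
    have f1 : (Nat.factorial n : ℝ) ≠ 0 := by positivity
    push_cast
    rw [c2]
    field_simp
    ring

open Polynomial

/-- sigma coefficients -/
def sg (l n : ℕ) : ℝ := 2 * pc l n * (Hh n - Hh l)

lemma sg_eq_zero (l n : ℕ) (h : l < n) : sg l n = 0 := by
  simp [sg, pc_eq_zero l n h]

lemma sg_top (l : ℕ) : sg l l = 0 := by simp [sg]

lemma sg_rec (l n : ℕ) :
    ((n:ℝ)+1)^2 * sg l (n+1) + ((l:ℝ)*((l:ℝ)+1) - (n:ℝ)*((n:ℝ)+1)) * sg l n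
      = 2*((n:ℝ)+1) * pc l (n+1) := by
  unfold sg
  rw [Hh_succ]
  have hne : ((n:ℝ)+1) ≠ 0 := by positivity
  have h := pc_rec l n
  field_simp
  linear_combination (Hh n - Hh l) * h

/-- The hypergeometric/Legendre operator. -/
def Mo (l : ℕ) (f : ℝ[X]) : ℝ[X] :=
  (X - X^2) * derivative (derivative f) + (1 - C 2 * X) * derivative f
    + C ((l:ℝ)*((l:ℝ)+1)) * f

lemma coeff_X_mul_deriv (p : ℝ[X]) (n : ℕ) :
    (X * derivative p).coeff n = (n:ℝ) * p.coeff n := by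
  cases n with
  | zero => simp
  | succ n => rw [coeff_X_mul, coeff_derivative]; push_cast; ring

lemma X_sq_deriv_deriv (f : ℝ[X]) :
    X^2 * derivative (derivative f) = X * derivative (X * derivative f) - X * derivative f := by
  rw [derivative_mul, derivative_X]
  ring

lemma coeff_Mo (l : ℕ) (f : ℝ[X]) (n : ℕ) :
    (Mo l f).coeff n = ((n:ℝ)+1)^2 * f.coeff (n+1)
      + ((l:ℝ)*((l:ℝ)+1) - (n:ℝ)*((n:ℝ)+1)) * f.coeff n := by
  have e : Mo l f = X * derivative (derivative f)
      - (X * derivative (X * derivative f) - X * derivative f)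
      + derivative f - C 2 * (X * derivative f) + C ((l:ℝ)*((l:ℝ)+1)) * f := by
    unfold Mo
    rw [← X_sq_deriv_deriv]
    ring
  rw [e]
  simp only [coeff_add, coeff_sub, coeff_C_mul, coeff_X_mul_deriv, coeff_derivative]
  push_cast
  ring

lemma Mo_ker (l : ℕ) (f : ℝ[X]) (h : Mo l f = 0) : ∀ n, f.coeff n = f.coeff 0 * pc l n := by
  intro n
  induction n with
  | zero => rw [pc_zero]; ring
  | succ n ih =>
    have h0 : (Mo l f).coeff n = 0 := by rw [h]; simp
    rw [coeff_Mo, ih] at h0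
    have hne : ((n:ℝ)+1)^2 ≠ 0 := by positivity
    apply mul_left_cancel₀ hne
    have hr := pc_rec l n
    linear_combination h0 - f.coeff 0 * hr

lemma Mo_comp (l : ℕ) (f : ℝ[X]) :
    Mo l (f.comp (1 - X)) = (Mo l f).comp (1 - X) := by
  have hd : derivative ((1:ℝ[X]) - X) = -1 := by
    rw [derivative_sub, derivative_one, derivative_X]; ring
  have d1 : derivative (f.comp (1 - X)) = -((derivative f).comp (1 - X)) := by
    rw [derivative_comp, hd]; ring
  have d2 : derivative (derivative (f.comp (1 - X)))
      = (derivative (derivative f)).comp (1 - X) := by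
    rw [d1, derivative_neg, derivative_comp, hd]; ring
  unfold Mo
  rw [d2, d1]
  simp only [add_comp, mul_comp, sub_comp, one_comp, X_comp, C_comp, pow_comp]
  have h2 : (C (2:ℝ)) = (2:ℝ[X]) := map_ofNat C 2
  simp only [h2]
  ring

lemma Mo_sub (l : ℕ) (f g : ℝ[X]) : Mo l (f - g) = Mo l f - Mo l g := by
  unfold Mo
  rw [derivative_sub, derivative_sub]
  ring

lemma Mo_add (l : ℕ) (f g : ℝ[X]) : Mo l (f + g) = Mo l f + Mo l g := by
  unfold Mo
  rw [derivative_add, derivative_add]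
  ring

lemma Mo_C_mul (l : ℕ) (a : ℝ) (f : ℝ[X]) : Mo l (C a * f) = C a * Mo l f := by
  unfold Mo
  rw [derivative_C_mul, derivative_C_mul]
  ring

def Pp (l : ℕ) : ℝ[X] := ∑ n ∈ range (l+1), C (pc l n) * X^n
def Ep (l : ℕ) : ℝ[X] := ∑ n ∈ range (l+1), C (sg l n) * X^n

lemma coeff_expl (l : ℕ) (a : ℕ → ℝ) (ha : ∀ m, l < m → a m = 0) (m : ℕ) :
    (∑ n ∈ range (l+1), C (a n) * X^n).coeff m = a m := by
  rw [finset_sum_coeff]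
  simp only [coeff_C_mul, coeff_X_pow]
  by_cases hm : m ≤ l
  · rw [Finset.sum_eq_single m]
    · simp
    · intro b _ hbm
      simp [Ne.symm hbm]
    · intro hnot
      exact absurd (Finset.mem_range.2 (by omega)) hnot
  · rw [ha m (by omega)]
    apply Finset.sum_eq_zero
    intro b hb
    have : b ≠ m := by
      have := Finset.mem_range.1 hb
      omega
    simp [Ne.symm this]

lemma Pp_coeff (l m : ℕ) : (Pp l).coeff m = pc l m :=
  coeff_expl l (pc l) (pc_eq_zero l) m

lemma Ep_coeff (l m : ℕ) : (Ep l).coeff m = sg l m :=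
  coeff_expl l (sg l) (sg_eq_zero l) m

lemma Mo_Pp (l : ℕ) : Mo l (Pp l) = 0 := by
  apply Polynomial.ext
  intro n
  rw [coeff_Mo, Pp_coeff, Pp_coeff, coeff_zero]
  linarith [pc_rec l n]

lemma Mo_Ep (l : ℕ) : Mo l (Ep l) = C 2 * derivative (Pp l) := by
  apply Polynomial.ext
  intro n
  rw [coeff_Mo, Ep_coeff, Ep_coeff, coeff_C_mul, coeff_derivative, Pp_coeff]
  have := sg_rec l n
  push_cast
  linarith [sg_rec l n]

lemma one_sub_X_pow_coeff_top (n : ℕ) : (((1:ℝ[X]) - X)^n).coeff n = (-1)^n := by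
  have e0 : ((1:ℝ[X]) - X) = C (-1) * (X - C 1) := by
    rw [C_neg, C_1]
    ring
  have e : ((1:ℝ[X]) - X)^n = C ((-1:ℝ)^n) * (X - C 1)^n := by
    rw [e0, mul_pow, ← C_pow]
  rw [e, coeff_C_mul]
  have hm : ((X - C (1:ℝ))^n).Monic := (monic_X_sub_C (1:ℝ)).pow n
  have hd : ((X - C (1:ℝ))^n).natDegree = n := by
    rw [natDegree_pow, natDegree_X_sub_C, mul_one]
  have := hm.coeff_natDegree
  rw [hd] at this
  rw [this, mul_one]

lemma one_sub_X_pow_coeff_lt (n m : ℕ) (h : n < m) : (((1:ℝ[X]) - X)^n).coeff m = 0 := by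
  apply Polynomial.coeff_eq_zero_of_natDegree_lt
  calc (((1:ℝ[X]) - X)^n).natDegree ≤ n * ((1:ℝ[X]) - X).natDegree := natDegree_pow_le
  _ ≤ n * 1 := by
      apply Nat.mul_le_mul_left
      rw [show ((1:ℝ[X]) - X) = -(X - C 1) by simp, natDegree_neg, natDegree_X_sub_C]
  _ < m := by omega

lemma comp_coeff_top (l : ℕ) (a : ℕ → ℝ) :
    ((∑ n ∈ range (l+1), C (a n) * X^n).comp (1 - X)).coeff l = (-1)^l * a l := by
  have e : (∑ n ∈ range (l+1), C (a n) * X^n).comp (1 - X)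
      = ∑ n ∈ range (l+1), C (a n) * (1 - X)^n := by
    rw [Polynomial.sum_comp]
    simp only [mul_comp, C_comp, pow_comp, X_comp]
  rw [e, finset_sum_coeff]
  simp only [coeff_C_mul]
  rw [Finset.sum_range_succ, one_sub_X_pow_coeff_top]
  rw [Finset.sum_eq_zero]
  · ring
  · intro n hn
    rw [one_sub_X_pow_coeff_lt n l (Finset.mem_range.1 hn), mul_zero]

lemma Pp_parity (l : ℕ) : (Pp l).comp (1 - X) = C ((-1:ℝ)^l) * Pp l := by
  set g := (Pp l).comp (1 - X) - C ((-1:ℝ)^l) * Pp l with hg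
  have hM : Mo l g = 0 := by
    rw [hg, Mo_sub, Mo_comp, Mo_C_mul, Mo_Pp]
    simp
  have htop : g.coeff l = 0 := by
    rw [hg]
    rw [coeff_sub, coeff_C_mul, Pp_coeff]
    unfold Pp
    rw [comp_coeff_top l (pc l)]
    ring
  have hker := Mo_ker l g hM
  have h0 : g.coeff 0 = 0 := by
    have := hker l
    rw [htop] at this
    rcases mul_eq_zero.1 this.symm with h | h
    · exact h
    · exact absurd h (pc_ne_zero l l le_rfl)
  have : g = 0 := by
    apply Polynomial.ext
    intro n
    rw [hker n, h0, coeff_zero, zero_mul]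
  rw [hg] at this
  exact sub_eq_zero.1 this

lemma Pp_deriv_parity (l : ℕ) :
    (derivative (Pp l)).comp (1 - X) = - (C ((-1:ℝ)^l) * derivative (Pp l)) := by
  have h := congrArg derivative (Pp_parity l)
  rw [derivative_comp, derivative_C_mul] at h
  have hd : derivative ((1:ℝ[X]) - X) = -1 := by
    rw [derivative_sub, derivative_one, derivative_X]; ring
  rw [hd] at h
  have : (-1 : ℝ[X]) * (derivative (Pp l)).comp (1 - X) = C ((-1:ℝ)^l) * derivative (Pp l) := h
  linear_combination -this

lemma Ep_parity (l : ℕ) : (Ep l).comp (1 - X) = - (C ((-1:ℝ)^l) * Ep l) := by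
  set g := (Ep l).comp (1 - X) + C ((-1:ℝ)^l) * Ep l with hg
  have hM : Mo l g = 0 := by
    rw [hg, Mo_add, Mo_comp, Mo_C_mul, Mo_Ep]
    rw [mul_comp, C_comp]
    rw [Pp_deriv_parity l]
    ring
  have htop : g.coeff l = 0 := by
    rw [hg, coeff_add, coeff_C_mul, Ep_coeff]
    unfold Ep
    rw [comp_coeff_top l (sg l), sg_top]
    ring
  have hker := Mo_ker l g hM
  have h0 : g.coeff 0 = 0 := by
    have := hker l
    rw [htop] at this
    rcases mul_eq_zero.1 this.symm with h | h
    · exact h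
    · exact absurd h (pc_ne_zero l l le_rfl)
  have hz : g = 0 := by
    apply Polynomial.ext
    intro n
    rw [hker n, h0, coeff_zero, zero_mul]
  rw [hg] at hz
  linear_combination hz

/-- Function-level parity of P. -/
lemma P_reflect (l : ℕ) (x : ℝ) :
    ∑ n ∈ range (l+1), pc l n * (1-x)^n
      = (-1:ℝ)^l * ∑ n ∈ range (l+1), pc l n * x^n := by
  have hev : ∀ y : ℝ, (Pp l).eval y = ∑ n ∈ range (l+1), pc l n * y^n := by
    intro y
    unfold Pp
    rw [Polynomial.eval_finset_sum]
    apply Finset.sum_congr rfl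
    intro n _
    simp
  have h := congrArg (Polynomial.eval x) (Pp_parity l)
  rw [Polynomial.eval_comp] at h
  simp only [Polynomial.eval_mul, Polynomial.eval_C, Polynomial.eval_sub, Polynomial.eval_one,
    Polynomial.eval_X] at h
  rw [hev, hev] at h
  exact h

/-- Function-level parity of E. -/
lemma E_reflect (l : ℕ) (x : ℝ) :
    ∑ n ∈ range (l+1), sg l n * (1-x)^n
      = -((-1:ℝ)^l * ∑ n ∈ range (l+1), sg l n * x^n) := by
  have hev : ∀ y : ℝ, (Ep l).eval y = ∑ n ∈ range (l+1), sg l n * y^n := by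
    intro y
    unfold Ep
    rw [Polynomial.eval_finset_sum]
    apply Finset.sum_congr rfl
    intro n _
    simp
  have h := congrArg (Polynomial.eval x) (Ep_parity l)
  rw [Polynomial.eval_comp] at h
  simp only [Polynomial.eval_mul, Polynomial.eval_neg, Polynomial.eval_C, Polynomial.eval_sub,
    Polynomial.eval_one, Polynomial.eval_X] at h
  rw [hev, hev] at h
  exact h

lemma digamma_rec (t : ℝ) (ht : 0 < t) : digamma (t+1) = digamma t + 1/t := by
  have hne : ∀ m : ℕ, t ≠ -(m:ℝ) := by
    intro m
    have h1 : -(m:ℝ) ≤ 0 := by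
      simp only [neg_nonpos]
      positivity
    linarith
  have hne' : ∀ m : ℕ, t + 1 ≠ -(m:ℝ) := by
    intro m
    have h1 : -(m:ℝ) ≤ 0 := by
      simp only [neg_nonpos]
      positivity
    linarith
  have hdiff : DifferentiableAt ℝ Real.Gamma t := Real.differentiableAt_Gamma hne
  have hdiff' : DifferentiableAt ℝ Real.Gamma (t+1) := Real.differentiableAt_Gamma hne'
  have h1 : HasDerivAt Real.Gamma (deriv Real.Gamma t) t := hdiff.hasDerivAt
  have h2 : HasDerivAt (fun x : ℝ => Real.Gamma (x+1)) (deriv Real.Gamma (t+1)) t := by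
    have := (hdiff'.hasDerivAt).comp t ((hasDerivAt_id t).add_const 1)
    simpa [Function.comp_def] using this
  have h3 : HasDerivAt (fun x : ℝ => x * Real.Gamma x)
      (1 * Real.Gamma t + t * deriv Real.Gamma t) t := (hasDerivAt_id t).mul h1
  have heq : (fun x : ℝ => Real.Gamma (x+1)) =ᶠ[nhds t] (fun x : ℝ => x * Real.Gamma x) := by
    filter_upwards [IsOpen.mem_nhds isOpen_Ioi ht] with y hy
    exact Real.Gamma_add_one (ne_of_gt hy)
  have h4 : HasDerivAt (fun x : ℝ => x * Real.Gamma x) (deriv Real.Gamma (t+1)) t :=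
    h2.congr_of_eventuallyEq heq.symm
  have huniq : deriv Real.Gamma (t+1) = 1 * Real.Gamma t + t * deriv Real.Gamma t :=
    h4.unique h3
  have hG : Real.Gamma t ≠ 0 := (Real.Gamma_pos_of_pos ht).ne'
  have hG1 : Real.Gamma (t+1) = t * Real.Gamma t := Real.Gamma_add_one (ne_of_gt ht)
  unfold digamma
  rw [huniq, hG1]
  field_simp
  ring

lemma digamma_nat (m : ℕ) : digamma ((m:ℝ)+1) = digamma 1 + Hh m := by
  induction m with
  | zero => simp [Hh]
  | succ m ih =>
    have h : digamma (((m:ℝ)+1)+1) = digamma ((m:ℝ)+1) + 1/((m:ℝ)+1) :=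
      digamma_rec ((m:ℝ)+1) (by positivity)
    have e : ((m+1:ℕ):ℝ) + 1 = ((m:ℝ)+1)+1 := by push_cast; ring
    rw [e, h, ih, Hh_succ]
    ring

lemma hasSum_tail (x : ℝ) (hx1 : |x| < 1) (c : ℕ) (hc : 1 ≤ c) :
    HasSum (fun m : ℕ => x^(c+m) / ((c:ℝ)+m))
      (-Real.log (1-x) - ∑ i ∈ range (c-1), x^(i+1)/((i:ℝ)+1)) := by
  have base := Real.hasSum_pow_div_log_of_abs_lt_one hx1
  have h := (hasSum_nat_add_iff' (f := fun n : ℕ => x^(n+1)/((n:ℝ)+1)) (c-1)).2 base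
  have hfun : (fun n : ℕ => x^((n+(c-1))+1) / (((n+(c-1):ℕ):ℝ)+1))
      = (fun m : ℕ => x^(c+m) / ((c:ℝ)+m)) := by
    funext n
    have e1 : (n+(c-1))+1 = c+n := by omega
    have e2 : ((n+(c-1):ℕ):ℝ)+1 = (c:ℝ)+n := by
      have : (n+(c-1)) + 1 = c + n := by omega
      calc ((n+(c-1):ℕ):ℝ)+1 = (((n+(c-1))+1 : ℕ):ℝ) := by push_cast; ring
      _ = ((c+n : ℕ):ℝ) := by rw [this]
      _ = (c:ℝ)+n := by push_cast; ring
    rw [e1, e2]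
  rw [hfun] at h
  exact h

lemma hasSum_j (l j : ℕ) (hj : j ≤ l) (x : ℝ) (hx1 : |x| < 1) :
    HasSum (fun m : ℕ => pc l j * x^(l+1+m) / (((l+1+m:ℕ):ℝ) - j))
      (pc l j * x^j * (-Real.log (1-x) - ∑ i ∈ range (l-j), x^(i+1)/((i:ℝ)+1))) := by
  have h := (hasSum_tail x hx1 (l+1-j) (by omega)).mul_left (pc l j * x^j)
  have e0 : l+1-j-1 = l-j := by omega
  rw [e0] at h
  have hfun : (fun m : ℕ => pc l j * x^j * (x^((l+1-j)+m) / (((l+1-j:ℕ):ℝ)+m)))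
      = (fun m : ℕ => pc l j * x^(l+1+m) / (((l+1+m:ℕ):ℝ) - j)) := by
    funext m
    have e1 : x^j * x^((l+1-j)+m) = x^(l+1+m) := by
      rw [← pow_add]
      congr 1
      omega
    have e2 : ((l+1-j:ℕ):ℝ)+m = ((l+1+m:ℕ):ℝ) - j := by
      rw [Nat.cast_sub (by omega)]
      push_cast
      ring
    rw [← e2]
    calc pc l j * x^j * (x^((l+1-j)+m) / (((l+1-j:ℕ):ℝ)+m))
        = pc l j * (x^j * x^((l+1-j)+m)) / (((l+1-j:ℕ):ℝ)+m) := by ring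
      _ = pc l j * x^(l+1+m) / (((l+1-j:ℕ):ℝ)+m) := by rw [e1]
  rw [hfun] at h
  exact h

lemma hasSum_total (l : ℕ) (x : ℝ) (hx1 : |x| < 1) :
    HasSum (fun m : ℕ => av l (l+1+m) * x^(l+1+m))
      ((-1:ℝ)^l * ∑ j ∈ range (l+1),
        pc l j * x^j * (-Real.log (1-x) - ∑ i ∈ range (l-j), x^(i+1)/((i:ℝ)+1))) := by
  have h : HasSum (fun m : ℕ => ∑ j ∈ range (l+1), pc l j * x^(l+1+m) / (((l+1+m:ℕ):ℝ) - j))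
      (∑ j ∈ range (l+1),
        pc l j * x^j * (-Real.log (1-x) - ∑ i ∈ range (l-j), x^(i+1)/((i:ℝ)+1))) := by
    apply hasSum_sum
    intro j hj
    have := Finset.mem_range.1 hj
    exact hasSum_j l j (by omega) x hx1
  have hfun : (fun m : ℕ => ∑ j ∈ range (l+1), pc l j * x^(l+1+m) / (((l+1+m:ℕ):ℝ) - j))
      = (fun m : ℕ => ((-1:ℝ)^l * av l (l+1+m)) * x^(l+1+m)) := by
    funext m
    have e : ∑ j ∈ range (l+1), pc l j * x^(l+1+m) / (((l+1+m:ℕ):ℝ) - j)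
        = (∑ j ∈ range (l+1), pc l j / (((l+1+m:ℕ):ℝ) - j)) * x^(l+1+m) := by
      rw [Finset.sum_mul]
      apply Finset.sum_congr rfl
      intro j _
      ring
    rw [e, F2 l (l+1+m) (by omega)]
  rw [hfun] at h
  have h2 := h.mul_left ((-1:ℝ)^l)
  have hone : (-1:ℝ)^l * (-1:ℝ)^l = 1 := by
    rw [← pow_add, ← two_mul, pow_mul]
    norm_num
  have hfun2 : (fun m : ℕ => (-1:ℝ)^l * (((-1:ℝ)^l * av l (l+1+m)) * x^(l+1+m)))
      = (fun m : ℕ => av l (l+1+m) * x^(l+1+m)) := by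
    funext m
    calc (-1:ℝ)^l * (((-1:ℝ)^l * av l (l+1+m)) * x^(l+1+m))
        = ((-1:ℝ)^l * (-1:ℝ)^l) * (av l (l+1+m) * x^(l+1+m)) := by ring
      _ = av l (l+1+m) * x^(l+1+m) := by rw [hone]; ring
  rw [hfun2] at h2
  exact h2

lemma SS_eq (l : ℕ) (x : ℝ) :
    ∑ j ∈ range (l+1), pc l j * x^j * (∑ i ∈ range (l-j), x^(i+1)/((i:ℝ)+1))
    = ∑ n ∈ range (l+1), (pc l n * wc l n) * x^n := by
  have step1 : ∑ j ∈ range (l+1), pc l j * x^j * (∑ i ∈ range (l-j), x^(i+1)/((i:ℝ)+1))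
      = ∑ j ∈ range (l+1), ∑ i ∈ range (l-j), pc l j * x^(j+(i+1)) / ((i:ℝ)+1) := by
    apply Finset.sum_congr rfl
    intro j _
    rw [Finset.mul_sum]
    apply Finset.sum_congr rfl
    intro i _
    rw [pow_add]
    ring
  have step2 : ∑ n ∈ range (l+1), (pc l n * wc l n) * x^n
      = ∑ n ∈ range (l+1), ∑ j ∈ range n, (pc l j / ((n:ℝ)-j)) * x^n := by
    apply Finset.sum_congr rfl
    intro n hn
    have hn' : n ≤ l := by
      have := Finset.mem_range.1 hn
      omega
    rw [← Finset.sum_mul, F1 l n hn']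
  rw [step1, step2]
  rw [Finset.sum_sigma', Finset.sum_sigma']
  apply Finset.sum_nbij' (i := fun p => (⟨p.1 + p.2 + 1, p.1⟩ : (_ : ℕ) × ℕ))
    (j := fun q => (⟨q.2, q.1 - q.2 - 1⟩ : (_ : ℕ) × ℕ))
  · intro a ha
    simp only [Finset.mem_sigma, Finset.mem_range] at ha ⊢
    omega
  · intro a ha
    simp only [Finset.mem_sigma, Finset.mem_range] at ha ⊢
    omega
  · intro a ha
    simp only [Finset.mem_sigma, Finset.mem_range] at ha
    obtain ⟨a1, a2⟩ := a
    simp only at ha ⊢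
    rw [show a1 + a2 + 1 - a1 - 1 = a2 by omega]
  · intro a ha
    simp only [Finset.mem_sigma, Finset.mem_range] at ha
    obtain ⟨a1, a2⟩ := a
    simp only at ha ⊢
    rw [show a2 + (a1 - a2 - 1) + 1 = a1 by omega]
  · intro a ha
    simp only [Finset.mem_sigma, Finset.mem_range] at ha
    have e1 : a.1 + (a.2 + 1) = a.1 + a.2 + 1 := by omega
    have e2 : ((a.1 + a.2 + 1 : ℕ):ℝ) - (a.1:ℕ) = (a.2:ℝ) + 1 := by push_cast; ring
    rw [e1, e2]
    ring


lemma gamma_coeff (l n : ℕ) (hn : n ≤ l) :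
    (-1:ℝ)^n * (Real.Gamma (((l+1:ℕ):ℝ) + n) /
      (Real.Gamma (((l+1:ℕ):ℝ) - n) * ((Nat.factorial n : ℝ))^2)) = pc l n := by
  have e1 : ((l+1:ℕ):ℝ) + n = ((l+n : ℕ):ℝ) + 1 := by push_cast; ring
  have e2 : ((l+1:ℕ):ℝ) - n = ((l-n : ℕ):ℝ) + 1 := by
    rw [Nat.cast_sub hn]
    push_cast
    ring
  rw [e1, e2, Real.Gamma_nat_eq_factorial, Real.Gamma_nat_eq_factorial, pc, if_pos hn]
  ring

lemma digamma_factor (l n : ℕ) (hn : n ≤ l) :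
    -2 * digamma ((n:ℝ)+1) + digamma (((l+1:ℕ):ℝ) + n) + digamma (((l+1:ℕ):ℝ) - n)
      = Hh (l+n) + Hh (l-n) - 2 * Hh n := by
  have e1 : ((l+1:ℕ):ℝ) + n = ((l+n : ℕ):ℝ) + 1 := by push_cast; ring
  have e2 : ((l+1:ℕ):ℝ) - n = ((l-n : ℕ):ℝ) + 1 := by
    rw [Nat.cast_sub hn]
    push_cast
    ring
  rw [e1, e2, digamma_nat, digamma_nat, digamma_nat]
  ring

lemma gamma_tail (l m : ℕ) :
    Real.Gamma (((l+1:ℕ):ℝ) + m + ((l+1:ℕ):ℝ)) * Real.Gamma ((m:ℝ)+1) /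
      (Real.Gamma (((l+1:ℕ):ℝ) + m + 1))^2 = av l (l+1+m) := by
  have e1 : ((l+1:ℕ):ℝ) + m + ((l+1:ℕ):ℝ) = ((2*l+m+1 : ℕ):ℝ) + 1 := by push_cast; ring
  have e2 : ((m:ℕ):ℝ) + 1 = ((m : ℕ):ℝ) + 1 := rfl
  have e3 : ((l+1:ℕ):ℝ) + m + 1 = ((l+1+m : ℕ):ℝ) + 1 := by push_cast; ring
  rw [e1, e3, Real.Gamma_nat_eq_factorial, Real.Gamma_nat_eq_factorial,
    Real.Gamma_nat_eq_factorial]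
  unfold av
  rw [show (l+1+m)+l = 2*l+m+1 by omega, show (l+1+m)-(l+1) = m by omega]

lemma phi_eq (l : ℕ) (x : ℝ) (hx0 : 0 < x) (hx1 : x < 1) :
    phi (l+1) x = 2 * (∑ n ∈ range (l+1), pc l n * x^n) * (Real.log (1-x) - Real.log x)
      + 2 * ∑ n ∈ range (l+1), sg l n * x^n := by
  have habs : |x| < 1 := by
    rw [abs_of_pos hx0]
    exact hx1
  unfold phi
  have hs1 : ∑ n ∈ Finset.range (l+1),
      (-1 : ℝ) ^ n * (Real.Gamma (((l+1:ℕ) : ℝ) + n) /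
        (Real.Gamma (((l+1:ℕ) : ℝ) - n) * ((Nat.factorial n : ℝ)) ^ 2)) * x ^ n
      = ∑ n ∈ range (l+1), pc l n * x^n := by
    apply Finset.sum_congr rfl
    intro n hn
    rw [gamma_coeff l n (by have := Finset.mem_range.1 hn; omega)]
  have hs2 : ∑ n ∈ Finset.range (l+1),
      (-1 : ℝ) ^ n * (Real.Gamma (((l+1:ℕ) : ℝ) + n) /
        (Real.Gamma (((l+1:ℕ) : ℝ) - n) * ((Nat.factorial n : ℝ)) ^ 2)) *
        (-2 * digamma ((n : ℝ) + 1) + digamma (((l+1:ℕ) : ℝ) + n)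
          + digamma (((l+1:ℕ) : ℝ) - n)) * x ^ n
      = ∑ n ∈ range (l+1), pc l n * (Hh (l+n) + Hh (l-n) - 2 * Hh n) * x^n := by
    apply Finset.sum_congr rfl
    intro n hn
    have hn' : n ≤ l := by have := Finset.mem_range.1 hn; omega
    rw [gamma_coeff l n hn', digamma_factor l n hn']
  have hs3 : ∑' m : ℕ,
      (Real.Gamma (((l+1:ℕ) : ℝ) + m + (l+1:ℕ)) * Real.Gamma ((m : ℝ) + 1) /
        (Real.Gamma (((l+1:ℕ) : ℝ) + m + 1)) ^ 2) * x ^ ((l+1) + m)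
      = (-1:ℝ)^l * ∑ j ∈ range (l+1),
          pc l j * x^j * (-Real.log (1-x) - ∑ i ∈ range (l-j), x^(i+1)/((i:ℝ)+1)) := by
    have htot := hasSum_total l x habs
    have hfun : (fun m : ℕ => av l (l+1+m) * x^(l+1+m))
        = (fun m : ℕ =>
          (Real.Gamma (((l+1:ℕ) : ℝ) + m + (l+1:ℕ)) * Real.Gamma ((m : ℝ) + 1) /
            (Real.Gamma (((l+1:ℕ) : ℝ) + m + 1)) ^ 2) * x ^ ((l+1) + m)) := by
      funext m
      rw [gamma_tail l m]
    rw [hfun] at htot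
    exact htot.tsum_eq
  rw [hs1, hs2, hs3]
  have hsign : (2:ℝ) * (-1:ℝ)^(l+1) * ((-1:ℝ)^l
      * ∑ j ∈ range (l+1),
          pc l j * x^j * (-Real.log (1-x) - ∑ i ∈ range (l-j), x^(i+1)/((i:ℝ)+1)))
      = -2 * ∑ j ∈ range (l+1),
          pc l j * x^j * (-Real.log (1-x) - ∑ i ∈ range (l-j), x^(i+1)/((i:ℝ)+1)) := by
    have hone : (-1:ℝ)^(l+1) * (-1:ℝ)^l = -1 := by
      rw [pow_succ]
      rw [show (-1:ℝ)^l * -1 * (-1:ℝ)^l = -((-1:ℝ)^l * (-1:ℝ)^l) by ring]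
      rw [← pow_add, ← two_mul, pow_mul]
      norm_num
    calc (2:ℝ) * (-1:ℝ)^(l+1) * ((-1:ℝ)^l * _)
        = ((-1:ℝ)^(l+1) * (-1:ℝ)^l) * (2 * _) := by ring
      _ = _ := by rw [hone]; ring
  rw [hsign]
  have hsplit : ∑ j ∈ range (l+1),
      pc l j * x^j * (-Real.log (1-x) - ∑ i ∈ range (l-j), x^(i+1)/((i:ℝ)+1))
      = -Real.log (1-x) * ∑ n ∈ range (l+1), pc l n * x^n
        - ∑ n ∈ range (l+1), (pc l n * wc l n) * x^n := by
    rw [← SS_eq l x, Finset.mul_sum, ← Finset.sum_sub_distrib]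
    apply Finset.sum_congr rfl
    intro j _
    ring
  rw [hsplit]
  have hcoef : ∀ n, pc l n * wc l n - pc l n * (Hh (l+n) + Hh (l-n) - 2 * Hh n) = sg l n := by
    intro n
    unfold wc sg
    ring
  have hE : ∑ n ∈ range (l+1), sg l n * x^n
      = ∑ n ∈ range (l+1), (pc l n * wc l n) * x^n
        - ∑ n ∈ range (l+1), pc l n * (Hh (l+n) + Hh (l-n) - 2 * Hh n) * x^n := by
    rw [← Finset.sum_sub_distrib]
    apply Finset.sum_congr rfl
    intro n _
    rw [← hcoef n]
    ring
  rw [hE]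
  ring

/-- `φ_k(x) = (−1)^k φ_k(1−x)` for `k ≥ 1` and `x ∈ (0,1)`. -/
theorem phi_reflection (k : ℕ) (hk : 1 ≤ k) (x : ℝ) (hx : x ∈ Set.Ioo (0 : ℝ) 1) :
    phi k x = (-1 : ℝ) ^ k * phi k (1 - x) := by
  obtain ⟨l, rfl⟩ : ∃ l, k = l + 1 := ⟨k - 1, by omega⟩
  obtain ⟨hx0, hx1⟩ := hx
  have h1 : phi (l+1) x = 2 * (∑ n ∈ range (l+1), pc l n * x^n)
      * (Real.log (1-x) - Real.log x) + 2 * ∑ n ∈ range (l+1), sg l n * x^n :=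
    phi_eq l x hx0 hx1
  have h2 : phi (l+1) (1-x) = 2 * (∑ n ∈ range (l+1), pc l n * (1-x)^n)
      * (Real.log (1-(1-x)) - Real.log (1-x)) + 2 * ∑ n ∈ range (l+1), sg l n * (1-x)^n :=
    phi_eq l (1-x) (by linarith) (by linarith)
  rw [show (1:ℝ)-(1-x) = x by ring] at h2
  rw [h1, h2, P_reflect l x, E_reflect l x]
  have hone : (-1:ℝ)^l * (-1:ℝ)^l = 1 := by
    rw [← pow_add, ← two_mul, pow_mul]
    norm_num
  rw [pow_succ]
  set P := ∑ n ∈ range (l+1), pc l n * x^n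
  set E := ∑ n ∈ range (l+1), sg l n * x^n
  set A := Real.log x
  set B := Real.log (1-x)
  linear_combination (2*P*(A-B) - 2*E) * hone

end
end

section
/- For every integer k ≥ 1, the function φ_k is twice differentiable on (0,1) and satisfies the differential equation (x − x²)·φ_k''(x) + (1 − 2x)·φ_k'(x) + k(k−1)·φ_k(x) = 0 for all x ∈ (0,1). -/
noncomputable section

open Finset

namespace PhiOde

def T (c : ℕ → ℝ) (n : ℕ) : ℝ := ((n : ℝ) + 1) * c (n + 1)

def SS (c : ℕ → ℝ) (x : ℝ) : ℝ := ∑' n, c n * x ^ n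

def PolyBnd (c : ℕ → ℝ) : Prop := ∃ C : ℝ, 0 ≤ C ∧ ∃ p : ℕ, ∀ n, |c n| ≤ C * ((n : ℝ) + 1) ^ p

lemma aux_summable (q : ℕ) {s : ℝ} (h0 : 0 ≤ s) (h1 : s < 1) :
    Summable fun n : ℕ => ((n : ℝ) + 1) ^ q * s ^ n := by
  rcases eq_or_lt_of_le h0 with h | h
  · apply summable_of_ne_finset_zero (s := {0})
    intro n hn
    simp only [Finset.mem_singleton] at hn
    rw [← h, zero_pow hn, mul_zero]
  · have hs : ‖s‖ < 1 := by rwa [Real.norm_eq_abs, abs_of_pos h]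
    have H : Summable fun n : ℕ => (n : ℝ) ^ q * s ^ n :=
      summable_pow_mul_geometric_of_norm_lt_one q hs
    have H2 : Summable fun n : ℕ => ((n + 1 : ℕ) : ℝ) ^ q * s ^ (n + 1) :=
      ((summable_nat_add_iff 1).2 H)
    have H3 : Summable fun n : ℕ => s⁻¹ * (((n + 1 : ℕ) : ℝ) ^ q * s ^ (n + 1)) := H2.mul_left _
    apply H3.congr
    intro n
    push_cast
    field_simp
    ring

lemma PolyBnd.summable {c : ℕ → ℝ} (hc : PolyBnd c) {x : ℝ} (hx : |x| < 1) :
    Summable fun n => c n * x ^ n := by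
  obtain ⟨C, hC0, p, hC⟩ := hc
  apply Summable.of_norm_bounded (g := fun n : ℕ => C * (((n : ℝ) + 1) ^ p * |x| ^ n))
    (((aux_summable p (abs_nonneg x) hx).mul_left C))
  intro n
  rw [Real.norm_eq_abs, abs_mul, abs_pow]
  calc |c n| * |x| ^ n ≤ (C * ((n : ℝ) + 1) ^ p) * |x| ^ n := by
        apply mul_le_mul_of_nonneg_right (hC n) (by positivity)
    _ = C * (((n : ℝ) + 1) ^ p * |x| ^ n) := by ring

lemma PolyBnd.shift {c : ℕ → ℝ} (hc : PolyBnd c) : PolyBnd (T c) := by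
  obtain ⟨C, hC0, p, hC⟩ := hc
  refine ⟨C * 2 ^ (p + 1), by positivity, p + 1, fun n => ?_⟩
  have h1 : |T c n| = ((n : ℝ) + 1) * |c (n + 1)| := by
    rw [T, abs_mul, abs_of_nonneg (by positivity)]
  rw [h1]
  have h2 : |c (n + 1)| ≤ C * ((n : ℝ) + 2) ^ p := by
    have := hC (n + 1); push_cast at this ⊢
    convert this using 3; ring
  calc ((n : ℝ) + 1) * |c (n + 1)| ≤ ((n : ℝ) + 2) * (C * ((n : ℝ) + 2) ^ p) := by
        apply mul_le_mul (by linarith) h2 (abs_nonneg _) (by positivity)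
    _ = C * ((n : ℝ) + 2) ^ (p + 1) := by ring
    _ ≤ C * (2 * ((n : ℝ) + 1)) ^ (p + 1) := by
        apply mul_le_mul_of_nonneg_left (pow_le_pow_left₀ (by positivity) (by linarith) _) hC0
    _ = C * 2 ^ (p + 1) * ((n : ℝ) + 1) ^ (p + 1) := by rw [mul_pow]; ring


lemma hasDerivAt_SS {c : ℕ → ℝ} (hc : PolyBnd c) {x : ℝ} (hx : |x| < 1) :
    HasDerivAt (SS c) (SS (T c) x) x := by
  obtain ⟨C, hC0, p, hC⟩ := hc
  set r : ℝ := (|x| + 1) / 2 with hr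
  have hr0 : 0 < r := by positivity
  have hxr : |x| < r := by simp only [hr]; linarith
  have hr1 : r < 1 := by simp only [hr]; linarith
  -- the uniform bound
  set u : ℕ → ℝ := fun n => C * ((n : ℝ) + 1) ^ (p + 1) * r ^ n / r with hu
  have hu_sum : Summable u := by
    have := (aux_summable (p + 1) hr0.le hr1).mul_left (C / r)
    apply this.congr; intro n; simp only [hu]; ring
  have hbound : ∀ (n : ℕ) (y : ℝ), y ∈ Set.Ioo (-r) r →
      ‖c n * ((n : ℝ) * y ^ (n - 1))‖ ≤ u n := by
    intro n y hy
    have hyr : |y| ≤ r := by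
      rw [abs_le]; exact ⟨hy.1.le, hy.2.le⟩
    rw [Real.norm_eq_abs, abs_mul, abs_mul, abs_pow]
    rcases Nat.eq_zero_or_pos n with h | h
    · subst h; simp [hu]; positivity
    · have h1 : |y| ^ (n - 1) ≤ r ^ (n - 1) :=
        pow_le_pow_left₀ (abs_nonneg y) hyr _
      have h2 : r ^ (n - 1) = r ^ n / r := by
        rw [eq_div_iff hr0.ne', ← pow_succ, Nat.sub_add_cancel h]
      calc |c n| * (|(n : ℝ)| * |y| ^ (n - 1))
          ≤ (C * ((n : ℝ) + 1) ^ p) * (((n : ℝ) + 1) * (r ^ n / r)) := by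
            apply mul_le_mul (hC n) ?_ (by positivity) (by positivity)
            apply mul_le_mul ?_ (h2 ▸ h1) (by positivity) (by positivity)
            rw [Nat.abs_cast]; linarith
        _ = u n := by simp only [hu, pow_succ]; ring
  have hmemx : x ∈ Set.Ioo (-r) r := by
    simp only [Set.mem_Ioo]
    constructor
    · linarith [neg_abs_le x]
    · linarith [le_abs_self x]
  have hmem0 : (0 : ℝ) ∈ Set.Ioo (-r) r := by
    simp only [Set.mem_Ioo]; constructor <;> linarith
  have hD : HasDerivAt (fun z => ∑' n, c n * z ^ n)
      (∑' n, c n * ((n : ℝ) * x ^ (n - 1))) x := by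
    refine hasDerivAt_tsum_of_isPreconnected hu_sum (isOpen_Ioo (a := -r) (b := r))
      (convex_Ioo _ _).isPreconnected
      (g := fun n y => c n * y ^ n) (g' := fun n y => c n * ((n : ℝ) * y ^ (n - 1)))
      (fun n y _ => (hasDerivAt_pow n y).const_mul (c n)) hbound hmem0 ?_ hmemx
    apply summable_of_ne_finset_zero (s := {0})
    intro n hn
    simp only [Finset.mem_singleton] at hn
    simp [zero_pow hn]
  have hsum' : Summable fun n => c n * ((n : ℝ) * x ^ (n - 1)) := by
    apply Summable.of_norm_bounded hu_sum
    intro n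
    exact hbound n x ⟨by linarith [neg_abs_le x], by linarith [le_abs_self x]⟩
  have : (∑' n, c n * ((n : ℝ) * x ^ (n - 1))) = SS (T c) x := by
    rw [Summable.tsum_eq_zero_add hsum']
    have hz : c 0 * ((0 : ℕ) * x ^ (0 - 1) : ℝ) = 0 := by norm_num
    rw [hz, zero_add, SS]
    congr 1; ext n
    rw [T, Nat.add_sub_cancel]
    push_cast
    ring
  rw [← this]
  exact hD

lemma tsum_shift {f : ℕ → ℝ} (hf0 : f 0 = 0) {x : ℝ} (hs : Summable fun n => f n * x ^ n) :
    x * ∑' n, f (n + 1) * x ^ n = ∑' n, f n * x ^ n := by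
  rw [Summable.tsum_eq_zero_add hs, hf0, zero_mul, zero_add, ← tsum_mul_left]
  congr 1; ext n; rw [pow_succ]; ring


lemma gamma_diff {y : ℝ} (hy : 0 < y) : DifferentiableAt ℝ Real.Gamma y := by
  apply Real.differentiableAt_Gamma
  intro m
  have h : (0:ℝ) ≤ (m : ℝ) := Nat.cast_nonneg m
  intro he
  rw [he] at hy
  linarith

lemma deriv_gamma_add_one {y : ℝ} (hy : 0 < y) :
    deriv Real.Gamma (y + 1) = Real.Gamma y + y * deriv Real.Gamma y := by
  have h1 : (fun x => Real.Gamma (x + 1)) =ᶠ[nhds y] fun x => x * Real.Gamma x := by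
    filter_upwards [eventually_gt_nhds hy] with z hz
    exact Real.Gamma_add_one hz.ne'
  have h2 : HasDerivAt (fun x => Real.Gamma (x + 1)) (deriv Real.Gamma (y + 1)) y := by
    have := ((gamma_diff (by linarith : (0:ℝ) < y + 1)).hasDerivAt).comp y
      ((hasDerivAt_id y).add_const 1)
    exact this.congr_deriv (mul_one _)
  have h3 : HasDerivAt (fun x => x * Real.Gamma x)
      (1 * Real.Gamma y + y * deriv Real.Gamma y) y :=
    (hasDerivAt_id y).mul (gamma_diff hy).hasDerivAt
  have := (h2.congr_of_eventuallyEq h1.symm).deriv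
  rw [← this, h3.deriv]
  ring

lemma digamma_add_one {y : ℝ} (hy : 0 < y) : digamma (y + 1) = digamma y + 1 / y := by
  have hG : Real.Gamma y ≠ 0 := (Real.Gamma_pos_of_pos hy).ne'
  rw [digamma, digamma, deriv_gamma_add_one hy, Real.Gamma_add_one hy.ne']
  field_simp
  ring


def aa (k n : ℕ) : ℝ :=
  (-1 : ℝ) ^ n * (Real.Gamma ((k : ℝ) + n) / (Real.Gamma ((k : ℝ) - n) * ((Nat.factorial n : ℝ)) ^ 2))

def dd (k n : ℕ) : ℝ :=
  -2 * digamma ((n : ℝ) + 1) + digamma ((k : ℝ) + n) + digamma ((k : ℝ) - n)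

def tt (k n : ℕ) : ℝ :=
  2 * (-1 : ℝ) ^ k * (Real.Gamma ((n : ℝ) + k) * Real.Gamma ((n : ℝ) - k + 1) / (Real.Gamma ((n : ℝ) + 1)) ^ 2)


variable {k n : ℕ}

lemma kn_pos (hk : 1 ≤ k) : (0 : ℝ) < (k : ℝ) + n := by
  have : (1 : ℝ) ≤ (k : ℝ) := by exact_mod_cast hk
  positivity

lemma kSubn_pos (hn : n < k) : (0 : ℝ) < (k : ℝ) - n := by
  have : (n : ℝ) < (k : ℝ) := by exact_mod_cast hn
  linarith

lemma aa_rec (hk : 1 ≤ k) (hn : n + 1 < k) :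
    ((n : ℝ) + 1) ^ 2 * aa k (n + 1) = ((n : ℝ) + k) * ((n : ℝ) + 1 - k) * aa k n := by
  have h1 : Real.Gamma ((k : ℝ) + (n + 1 : ℕ)) = ((k : ℝ) + n) * Real.Gamma ((k : ℝ) + n) := by
    have : ((k : ℝ) + (n + 1 : ℕ)) = ((k : ℝ) + n) + 1 := by push_cast; ring
    rw [this, Real.Gamma_add_one (kn_pos hk).ne']
  have hpos : (0 : ℝ) < (k : ℝ) - (n + 1 : ℕ) := kSubn_pos hn
  have h2 : Real.Gamma ((k : ℝ) - n) = ((k : ℝ) - n - 1) * Real.Gamma ((k : ℝ) - (n + 1 : ℕ)) := by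
    have he : ((k : ℝ) - n) = ((k : ℝ) - (n + 1 : ℕ)) + 1 := by push_cast; ring
    rw [he, Real.Gamma_add_one hpos.ne']
    push_cast
    ring
  have h3 : ((Nat.factorial (n + 1) : ℝ)) = ((n : ℝ) + 1) * (Nat.factorial n : ℝ) := by
    rw [Nat.factorial_succ]; push_cast; ring
  have hf : (Nat.factorial n : ℝ) ≠ 0 := by positivity
  have hG : Real.Gamma ((k : ℝ) - (n + 1 : ℕ)) ≠ 0 := (Real.Gamma_pos_of_pos hpos).ne'
  have hn1 : ((n : ℝ) + 1) ≠ 0 := by positivity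
  have hkn1 : ((k : ℝ) - (n : ℝ) - 1) ≠ 0 := by
    have : ((k : ℝ) - (n + 1 : ℕ)) = (k : ℝ) - n - 1 := by push_cast; ring
    rw [this] at hpos; exact hpos.ne'
  have key : ∀ G H F : ℝ, H ≠ 0 → F ≠ 0 →
      ((n : ℝ) + 1) ^ 2 * ((-1 : ℝ) ^ (n + 1) * (((k : ℝ) + n) * G / (H * (((n : ℝ) + 1) * F) ^ 2)))
        = ((n : ℝ) + k) * ((n : ℝ) + 1 - k) * ((-1 : ℝ) ^ n * (G / (((k : ℝ) - n - 1) * H * F ^ 2))) := by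
    intro G H F hH hF
    have e1 : ((n : ℝ) + 1) ^ 2 * ((-1 : ℝ) ^ (n + 1) * (((k : ℝ) + n) * G / (H * (((n : ℝ) + 1) * F) ^ 2)))
        = (((n : ℝ) + 1) ^ 2 * ((-1 : ℝ) ^ (n + 1) * (((k : ℝ) + n) * G))) / (H * (((n : ℝ) + 1) * F) ^ 2) := by
      ring
    have e2 : ((n : ℝ) + k) * ((n : ℝ) + 1 - k) * ((-1 : ℝ) ^ n * (G / (((k : ℝ) - n - 1) * H * F ^ 2)))
        = (((n : ℝ) + k) * ((n : ℝ) + 1 - k) * ((-1 : ℝ) ^ n * G)) / (((k : ℝ) - n - 1) * H * F ^ 2) := by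
      ring
    rw [e1, e2, div_eq_div_iff (mul_ne_zero hH (by positivity))
      (mul_ne_zero (mul_ne_zero hkn1 hH) (by positivity))]
    simp only [pow_succ]
    ring
  rw [aa, aa, h1, h2, h3]
  exact key _ _ _ hG hf

lemma dd_diff (hk : 1 ≤ k) (hn : n + 1 < k) :
    dd k (n + 1) = dd k n - 2 / ((n : ℝ) + 1) + 1 / ((k : ℝ) + n) - 1 / ((k : ℝ) - n - 1) := by
  have e1 : digamma (((n + 1 : ℕ) : ℝ) + 1) = digamma ((n : ℝ) + 1) + 1 / ((n : ℝ) + 1) := by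
    have : (((n + 1 : ℕ) : ℝ) + 1) = ((n : ℝ) + 1) + 1 := by push_cast; ring
    rw [this, digamma_add_one (by positivity)]
  have e2 : digamma ((k : ℝ) + (n + 1 : ℕ)) = digamma ((k : ℝ) + n) + 1 / ((k : ℝ) + n) := by
    have : ((k : ℝ) + (n + 1 : ℕ)) = ((k : ℝ) + n) + 1 := by push_cast; ring
    rw [this, digamma_add_one (kn_pos hk)]
  have hpos : (0 : ℝ) < (k : ℝ) - n - 1 := by
    have := kSubn_pos hn; push_cast at this; linarith
  have e3 : digamma ((k : ℝ) - n) = digamma ((k : ℝ) - (n + 1 : ℕ)) + 1 / ((k : ℝ) - n - 1) := by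
    have h : ((k : ℝ) - n) = ((k : ℝ) - (n + 1 : ℕ)) + 1 := by push_cast; ring
    have h2 : ((k : ℝ) - (n + 1 : ℕ)) = (k : ℝ) - n - 1 := by push_cast; ring
    rw [h, digamma_add_one (h2 ▸ hpos), h2]
    norm_num
  rw [dd, dd, e1, e2]
  rw [show digamma ((k:ℝ) - (n + 1 : ℕ)) = digamma ((k : ℝ) - n) - 1 / ((k : ℝ) - n - 1) by
    rw [e3]; ring]
  ring


def A (k n : ℕ) : ℝ := if n < k then aa k n else 0
def E (k n : ℕ) : ℝ := if n < k then -2 * aa k n * dd k n else tt k n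

lemma tt_rec (hk : 1 ≤ k) (hn : k ≤ n) :
    ((n : ℝ) + 1) ^ 2 * tt k (n + 1) = ((n : ℝ) + k) * ((n : ℝ) + 1 - k) * tt k n := by
  have hnk : (0 : ℝ) < (n : ℝ) + k := by
    have : (1 : ℝ) ≤ (k : ℝ) := by exact_mod_cast hk
    positivity
  have hnk1 : (0 : ℝ) < (n : ℝ) - k + 1 := by
    have : (k : ℝ) ≤ (n : ℝ) := by exact_mod_cast hn
    linarith
  have h1 : Real.Gamma (((n + 1 : ℕ) : ℝ) + k) = ((n : ℝ) + k) * Real.Gamma ((n : ℝ) + k) := by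
    have : (((n + 1 : ℕ) : ℝ) + k) = ((n : ℝ) + k) + 1 := by push_cast; ring
    rw [this, Real.Gamma_add_one hnk.ne']
  have h2 : Real.Gamma (((n + 1 : ℕ) : ℝ) - k + 1) = ((n : ℝ) - k + 1) * Real.Gamma ((n : ℝ) - k + 1) := by
    have : (((n + 1 : ℕ) : ℝ) - k + 1) = ((n : ℝ) - k + 1) + 1 := by push_cast; ring
    rw [this, Real.Gamma_add_one hnk1.ne']
  have h3 : Real.Gamma (((n + 1 : ℕ) : ℝ) + 1) = ((n : ℝ) + 1) * Real.Gamma ((n : ℝ) + 1) := by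
    have : (((n + 1 : ℕ) : ℝ) + 1) = ((n : ℝ) + 1) + 1 := by push_cast; ring
    rw [this, Real.Gamma_add_one (by positivity)]
  have hG3 : Real.Gamma ((n : ℝ) + 1) ≠ 0 := (Real.Gamma_pos_of_pos (by positivity)).ne'
  have hn1 : ((n : ℝ) + 1) ≠ 0 := by positivity
  rw [tt, tt, h1, h2, h3]
  field_simp
  ring

lemma junction (hk : 1 ≤ k) (hn : n + 1 = k) :
    ((n : ℝ) + 1) ^ 2 * E k (n + 1) - ((n : ℝ) + k) * ((n : ℝ) + 1 - k) * E k n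
      - 4 * ((n : ℝ) + 1) * A k (n + 1) + (4 * (n : ℝ) + 2) * A k n = 0 := by
  subst hn
  have e1 : E (n + 1) (n + 1) = tt (n + 1) (n + 1) := by rw [E, if_neg (lt_irrefl _)]
  have e2 : A (n + 1) (n + 1) = 0 := by rw [A, if_neg (lt_irrefl _)]
  have e3 : A (n + 1) n = aa (n + 1) n := by rw [A, if_pos (Nat.lt_succ_self n)]
  have hz : ((n : ℝ) + 1 - ((n + 1 : ℕ) : ℝ)) = 0 := by push_cast; ring
  rw [e1, e2, e3, hz]
  have g1 : Real.Gamma (((n + 1 : ℕ) : ℝ) + ((n + 1 : ℕ) : ℝ)) = ((Nat.factorial (2 * n + 1) : ℝ)) := by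
    have : (((n + 1 : ℕ) : ℝ) + ((n + 1 : ℕ) : ℝ)) = ((2 * n + 1 : ℕ) : ℝ) + 1 := by push_cast; ring
    rw [this, Real.Gamma_nat_eq_factorial]
  have g2 : Real.Gamma (((n + 1 : ℕ) : ℝ) - ((n + 1 : ℕ) : ℝ) + 1) = 1 := by
    have : (((n + 1 : ℕ) : ℝ) - ((n + 1 : ℕ) : ℝ) + 1) = 1 := by push_cast; ring
    rw [this, Real.Gamma_one]
  have g3 : Real.Gamma (((n + 1 : ℕ) : ℝ) + 1) = ((Nat.factorial (n + 1) : ℝ)) :=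
    Real.Gamma_nat_eq_factorial (n + 1)
  have g4 : Real.Gamma (((n + 1 : ℕ) : ℝ) + (n : ℝ)) = ((Nat.factorial (2 * n) : ℝ)) := by
    have : (((n + 1 : ℕ) : ℝ) + (n : ℝ)) = ((2 * n : ℕ) : ℝ) + 1 := by push_cast; ring
    rw [this, Real.Gamma_nat_eq_factorial]
  have g5 : Real.Gamma (((n + 1 : ℕ) : ℝ) - (n : ℝ)) = 1 := by
    have : (((n + 1 : ℕ) : ℝ) - (n : ℝ)) = 1 := by push_cast; ring
    rw [this, Real.Gamma_one]
  rw [tt, aa, g1, g2, g3, g4, g5]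
  have f1 : ((Nat.factorial (2 * n + 1) : ℝ)) = (2 * (n : ℝ) + 1) * (Nat.factorial (2 * n) : ℝ) := by
    rw [Nat.factorial_succ]; push_cast; ring
  have f2 : ((Nat.factorial (n + 1) : ℝ)) = ((n : ℝ) + 1) * (Nat.factorial n : ℝ) := by
    rw [Nat.factorial_succ]; push_cast; ring
  have hf : (Nat.factorial n : ℝ) ≠ 0 := by positivity
  have hn1 : ((n : ℝ) + 1) ≠ 0 := by positivity
  rw [f1, f2]
  field_simp
  ring

lemma recA (hk : 1 ≤ k) (n : ℕ) :
    ((n : ℝ) + 1) ^ 2 * A k (n + 1) = ((n : ℝ) + k) * ((n : ℝ) + 1 - k) * A k n := by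
  rcases lt_trichotomy (n + 1) k with h | h | h
  · rw [A, A, if_pos h, if_pos (Nat.lt_of_succ_lt h)]
    exact aa_rec hk h
  · rw [A, A, if_neg (by omega), if_pos (by omega)]
    have hz : ((n : ℝ) + 1 - (k : ℝ)) = 0 := by
      rw [← h]; push_cast; ring
    rw [hz]; ring
  · rw [A, A, if_neg (by omega), if_neg (by omega)]
    ring

lemma recE (hk : 1 ≤ k) (n : ℕ) :
    ((n : ℝ) + 1) ^ 2 * E k (n + 1) - ((n : ℝ) + k) * ((n : ℝ) + 1 - k) * E k n
      - 4 * ((n : ℝ) + 1) * A k (n + 1) + (4 * (n : ℝ) + 2) * A k n = 0 := by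
  rcases lt_trichotomy (n + 1) k with h | h | h
  · have hnk : n < k := Nat.lt_of_succ_lt h
    rw [E, E, A, A, if_pos h, if_pos hnk, if_pos h, if_pos hnk]
    have hn1 : ((n : ℝ) + 1) ≠ 0 := by positivity
    have hkn : ((k : ℝ) + (n : ℝ)) ≠ 0 := (kn_pos hk).ne'
    have hkn1 : ((k : ℝ) - (n : ℝ) - 1) ≠ 0 := by
      have : (n : ℝ) + 1 < (k : ℝ) := by exact_mod_cast h
      intro hcontra; rw [sub_eq_zero] at *; nlinarith [hcontra]
    have haa1 : aa k (n + 1) = ((n : ℝ) + k) * ((n : ℝ) + 1 - k) * aa k n / ((n : ℝ) + 1) ^ 2 := by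
      rw [← aa_rec hk h]; field_simp
    rw [haa1, dd_diff hk h]
    field_simp
    ring
  · exact junction hk h
  · have h1 : ¬ (n + 1 < k) := by omega
    have h2 : ¬ (n < k) := by omega
    rw [E, E, A, A, if_neg h1, if_neg h2, if_neg h1, if_neg h2]
    have := tt_rec hk (by omega : k ≤ n)
    linarith [this]


lemma fact_le (m n : ℕ) : (n + m).factorial ≤ n.factorial * (n + m) ^ m := by
  induction m with
  | zero => simp
  | succ m ih =>
    have h1 : (n + (m + 1)).factorial = (n + m + 1) * (n + m).factorial := by
      rw [show n + (m + 1) = (n + m) + 1 from rfl, Nat.factorial_succ]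
    rw [h1]
    calc (n + m + 1) * (n + m).factorial ≤ (n + m + 1) * (n.factorial * (n + m) ^ m) :=
          Nat.mul_le_mul_left _ ih
      _ ≤ (n + m + 1) * (n.factorial * (n + m + 1) ^ m) := by
          apply Nat.mul_le_mul_left
          exact Nat.mul_le_mul_left _ (Nat.pow_le_pow_left (Nat.le_succ _) m)
      _ = n.factorial * (n + (m + 1)) ^ (m + 1) := by ring

lemma polyBnd_A : PolyBnd (A k) := by
  refine ⟨∑ m ∈ Finset.range k, |A k m|, Finset.sum_nonneg fun m _ => abs_nonneg _, 0, fun n => ?_⟩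
  rw [pow_zero, mul_one]
  by_cases h : n < k
  · exact Finset.single_le_sum (f := fun m => |A k m|) (fun m _ => abs_nonneg _)
      (Finset.mem_range.mpr h)
  · rw [A, if_neg h, abs_zero]
    exact Finset.sum_nonneg fun m _ => abs_nonneg _

lemma tt_bound (hk : 1 ≤ k) (hn : k ≤ n) :
    |tt k n| ≤ 2 * (k : ℝ) ^ k * ((n : ℝ) + 1) ^ k := by
  have g1 : Real.Gamma ((n : ℝ) + k) = ((n + k - 1).factorial : ℝ) := by
    have : ((n : ℝ) + k) = (((n + k - 1 : ℕ)) : ℝ) + 1 := by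
      have : 1 ≤ n + k := by omega
      push_cast [Nat.cast_sub this]
      ring
    rw [this, Real.Gamma_nat_eq_factorial]
  have g2 : Real.Gamma ((n : ℝ) - k + 1) = ((n - k).factorial : ℝ) := by
    have : ((n : ℝ) - k + 1) = (((n - k : ℕ)) : ℝ) + 1 := by
      push_cast [Nat.cast_sub hn]
      ring
    rw [this, Real.Gamma_nat_eq_factorial]
  have g3 : Real.Gamma ((n : ℝ) + 1) = (n.factorial : ℝ) := Real.Gamma_nat_eq_factorial n
  rw [tt, g1, g2, g3]
  have hF3 : (0 : ℝ) < (n.factorial : ℝ) := by positivity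
  have habs : |2 * (-1 : ℝ) ^ k * (((n + k - 1).factorial : ℝ) * ((n - k).factorial : ℝ) / ((n.factorial : ℝ)) ^ 2)|
      = 2 * (((n + k - 1).factorial : ℝ) * ((n - k).factorial : ℝ) / ((n.factorial : ℝ)) ^ 2) := by
    rw [abs_mul, abs_mul, abs_pow, abs_neg, abs_one, one_pow, mul_one,
      abs_of_nonneg (by positivity : (0:ℝ) ≤ (2:ℝ)),
      abs_of_nonneg (by positivity : (0:ℝ) ≤ (((n + k - 1).factorial : ℝ) * ((n - k).factorial : ℝ) / ((n.factorial : ℝ)) ^ 2))]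
  rw [habs]
  have key : (((n + k - 1).factorial : ℝ) * ((n - k).factorial : ℝ) / ((n.factorial : ℝ)) ^ 2)
      ≤ ((n + k - 1 : ℕ) : ℝ) ^ (k - 1) := by
    rw [div_le_iff₀ (by positivity)]
    have h1 : ((n + k - 1).factorial : ℝ) ≤ (n.factorial : ℝ) * ((n + k - 1 : ℕ) : ℝ) ^ (k - 1) := by
      have := fact_le (k - 1) n
      have he : n + (k - 1) = n + k - 1 := by omega
      rw [he] at this
      exact_mod_cast this
    have h2 : ((n - k).factorial : ℝ) ≤ (n.factorial : ℝ) :=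
      Nat.cast_le.mpr (Nat.factorial_le (by omega))
    calc ((n + k - 1).factorial : ℝ) * ((n - k).factorial : ℝ)
        ≤ ((n.factorial : ℝ) * ((n + k - 1 : ℕ) : ℝ) ^ (k - 1)) * (n.factorial : ℝ) := by
          apply mul_le_mul h1 h2 (by positivity) (by positivity)
      _ = ((n + k - 1 : ℕ) : ℝ) ^ (k - 1) * ((n.factorial : ℝ)) ^ 2 := by ring
  have key2 : ((n + k - 1 : ℕ) : ℝ) ^ (k - 1) ≤ (k : ℝ) ^ k * ((n : ℝ) + 1) ^ k := by
    have hb : ((n + k - 1 : ℕ) : ℝ) ≤ (k : ℝ) * ((n : ℝ) + 1) := by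
      have : ((n + k - 1 : ℕ) : ℝ) ≤ ((n : ℝ) + (k : ℝ)) := by
        have : (n + k - 1 : ℕ) ≤ n + k := by omega
        calc ((n + k - 1 : ℕ) : ℝ) ≤ ((n + k : ℕ) : ℝ) := Nat.cast_le.mpr this
          _ = (n : ℝ) + k := by push_cast; ring
      have hk1 : (1 : ℝ) ≤ (k : ℝ) := by exact_mod_cast hk
      nlinarith
    have hb1 : (1 : ℝ) ≤ (k : ℝ) * ((n : ℝ) + 1) := by
      have hk1 : (1 : ℝ) ≤ (k : ℝ) := by exact_mod_cast hk
      nlinarith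
    calc ((n + k - 1 : ℕ) : ℝ) ^ (k - 1) ≤ ((k : ℝ) * ((n : ℝ) + 1)) ^ (k - 1) :=
          pow_le_pow_left₀ (by positivity) hb _
      _ ≤ ((k : ℝ) * ((n : ℝ) + 1)) ^ k := pow_le_pow_right₀ hb1 (by omega)
      _ = (k : ℝ) ^ k * ((n : ℝ) + 1) ^ k := mul_pow _ _ _
  calc 2 * (((n + k - 1).factorial : ℝ) * ((n - k).factorial : ℝ) / ((n.factorial : ℝ)) ^ 2)
      ≤ 2 * ((n + k - 1 : ℕ) : ℝ) ^ (k - 1) := by linarith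
    _ ≤ 2 * ((k : ℝ) ^ k * ((n : ℝ) + 1) ^ k) := by linarith
    _ = 2 * (k : ℝ) ^ k * ((n : ℝ) + 1) ^ k := by ring

lemma polyBnd_E (hk : 1 ≤ k) : PolyBnd (E k) := by
  refine ⟨(∑ m ∈ Finset.range k, |E k m|) + 2 * (k : ℝ) ^ k,
    by positivity, k, fun n => ?_⟩
  have hS : (0 : ℝ) ≤ ∑ m ∈ Finset.range k, |E k m| := Finset.sum_nonneg fun m _ => abs_nonneg _
  have hone : (1 : ℝ) ≤ ((n : ℝ) + 1) ^ k := one_le_pow₀ (by linarith [Nat.cast_nonneg (α := ℝ) n])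
  by_cases h : n < k
  · have h1 : |E k n| ≤ ∑ m ∈ Finset.range k, |E k m| :=
      Finset.single_le_sum (f := fun m => |E k m|) (fun m _ => abs_nonneg _) (Finset.mem_range.mpr h)
    have h2 : (0 : ℝ) ≤ 2 * (k : ℝ) ^ k := by positivity
    nlinarith
  · rw [E, if_neg h]
    have := tt_bound hk (by omega : k ≤ n)
    nlinarith

lemma polyBnd_of_le {c d : ℕ → ℝ} (hc : PolyBnd c) (q : ℕ)
    (h : ∀ n, |d n| ≤ ((n : ℝ) + 1) ^ q * |c n|) : PolyBnd d := by
  obtain ⟨C, hC0, p, hC⟩ := hc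
  refine ⟨C, hC0, q + p, fun n => ?_⟩
  calc |d n| ≤ ((n : ℝ) + 1) ^ q * |c n| := h n
    _ ≤ ((n : ℝ) + 1) ^ q * (C * ((n : ℝ) + 1) ^ p) :=
        mul_le_mul_of_nonneg_left (hC n) (by positivity)
    _ = C * ((n : ℝ) + 1) ^ (q + p) := by rw [pow_add]; ring

lemma polyBnd_n_mul {c : ℕ → ℝ} (hc : PolyBnd c) : PolyBnd (fun n => (n : ℝ) * c n) := by
  apply polyBnd_of_le hc 1
  intro n
  rw [abs_mul, pow_one, Nat.abs_cast]
  apply mul_le_mul_of_nonneg_right (by linarith) (abs_nonneg _)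

lemma polyBnd_lin_mul {c : ℕ → ℝ} (hc : PolyBnd c) (α β : ℝ) :
    PolyBnd (fun n => (α * (n : ℝ) + β) * c n) := by
  obtain ⟨C, hC0, p, hC⟩ := hc
  refine ⟨(|α| + |β|) * C, by positivity, p + 1, fun n => ?_⟩
  have h1 : |α * (n : ℝ) + β| ≤ (|α| + |β|) * ((n : ℝ) + 1) := by
    calc |α * (n : ℝ) + β| ≤ |α * (n : ℝ)| + |β| := abs_add_le _ _
      _ = |α| * (n : ℝ) + |β| := by rw [abs_mul, Nat.abs_cast]
      _ ≤ (|α| + |β|) * ((n : ℝ) + 1) := by nlinarith [abs_nonneg α, abs_nonneg β, Nat.cast_nonneg (α := ℝ) n]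
  calc |(α * (n : ℝ) + β) * c n| = |α * (n : ℝ) + β| * |c n| := abs_mul _ _
    _ ≤ ((|α| + |β|) * ((n : ℝ) + 1)) * (C * ((n : ℝ) + 1) ^ p) := by
        apply mul_le_mul h1 (hC n) (abs_nonneg _) (by positivity)
    _ = (|α| + |β|) * C * ((n : ℝ) + 1) ^ (p + 1) := by rw [pow_succ]; ring

lemma key_combo {c b : ℕ → ℝ} (hc : PolyBnd c) (hb : PolyBnd b) (K : ℝ)
    (hrec : ∀ n : ℕ, ((n : ℝ) + 1) ^ 2 * c (n + 1) - (((n : ℝ)) ^ 2 + (n : ℝ) - K) * c n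
      - 4 * ((n : ℝ) + 1) * b (n + 1) + (4 * (n : ℝ) + 2) * b n = 0)
    {x : ℝ} (hx : |x| < 1) :
    (x - x ^ 2) * SS (T (T c)) x + (1 - 2 * x) * SS (T c) x + K * SS c x
      + 2 * SS b x - 4 * (1 - x) * SS (T b) x = 0 := by
  have pc := hc
  have pc1 : PolyBnd (T c) := hc.shift
  have pc2 : PolyBnd (T (T c)) := pc1.shift
  have pb1 : PolyBnd (T b) := hb.shift
  have pf1 : PolyBnd (fun n => (n : ℝ) * T c n) := polyBnd_n_mul pc1
  have pf3 : PolyBnd (fun n => (n : ℝ) * c n) := polyBnd_n_mul hc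
  have pf2 : PolyBnd (fun n => ((n : ℝ) - 1) * ((n : ℝ) * c n)) := by
    have h := polyBnd_lin_mul pf3 1 (-1)
    have he : (fun n : ℕ => (1 * (n : ℝ) + -1) * ((n : ℝ) * c n))
        = fun n : ℕ => ((n : ℝ) - 1) * ((n : ℝ) * c n) := by funext n; ring
    rwa [he] at h
  have pfb : PolyBnd (fun n => (n : ℝ) * b n) := polyBnd_n_mul hb
  -- shift identities
  have E1 : x * SS (T (T c)) x = ∑' n : ℕ, ((n : ℝ) * T c n) * x ^ n := by
    rw [SS, show (∑' n : ℕ, T (T c) n * x ^ n) = ∑' n : ℕ, (((n + 1 : ℕ) : ℝ) * T c (n + 1)) * x ^ n by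
      congr 1; funext n; rw [T]; push_cast; ring]
    exact tsum_shift (by simp) (pf1.summable hx)
  have E2 : x * ∑' n : ℕ, ((n : ℝ) * T c n) * x ^ n
      = ∑' n : ℕ, (((n : ℝ) - 1) * ((n : ℝ) * c n)) * x ^ n := by
    rw [show (∑' n : ℕ, ((n : ℝ) * T c n) * x ^ n)
        = ∑' n : ℕ, ((((n + 1 : ℕ) : ℝ) - 1) * (((n + 1 : ℕ) : ℝ) * c (n + 1))) * x ^ n by
      congr 1; funext n; rw [T]; push_cast; ring]
    exact tsum_shift (by simp) (pf2.summable hx)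
  have E3 : x * SS (T c) x = ∑' n : ℕ, ((n : ℝ) * c n) * x ^ n := by
    rw [SS, show (∑' n : ℕ, T c n * x ^ n) = ∑' n : ℕ, (((n + 1 : ℕ) : ℝ) * c (n + 1)) * x ^ n by
      congr 1; funext n; rw [T]; push_cast; ring]
    exact tsum_shift (by simp) (pf3.summable hx)
  have E4 : x * SS (T b) x = ∑' n : ℕ, ((n : ℝ) * b n) * x ^ n := by
    rw [SS, show (∑' n : ℕ, T b n * x ^ n) = ∑' n : ℕ, (((n + 1 : ℕ) : ℝ) * b (n + 1)) * x ^ n by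
      congr 1; funext n; rw [T]; push_cast; ring]
    exact tsum_shift (by simp) (pfb.summable hx)
  -- rewrite the goal
  have hLHS : (x - x ^ 2) * SS (T (T c)) x + (1 - 2 * x) * SS (T c) x + K * SS c x
      + 2 * SS b x - 4 * (1 - x) * SS (T b) x
      = (∑' n : ℕ, ((n : ℝ) * T c n) * x ^ n) - (∑' n : ℕ, (((n : ℝ) - 1) * ((n : ℝ) * c n)) * x ^ n)
        + (SS (T c) x - 2 * ∑' n : ℕ, ((n : ℝ) * c n) * x ^ n) + K * SS c x + 2 * SS b x
        - (4 * SS (T b) x - 4 * ∑' n : ℕ, ((n : ℝ) * b n) * x ^ n) := by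
    rw [← E1, ← E3, ← E4, ← E2, ← E1]
    ring
  rw [hLHS]
  -- combine into one HasSum
  have h1 := (pf1.summable hx).hasSum
  have h2 := (pf2.summable hx).hasSum
  have h3 := (pc1.summable hx).hasSum
  have h4 := (pf3.summable hx).hasSum
  have h5 := (pc.summable hx).hasSum
  have h6 := (hb.summable hx).hasSum
  have h7 := (pb1.summable hx).hasSum
  have h8 := (pfb.summable hx).hasSum
  have H := ((((h1.sub h2).add (h3.sub (h4.mul_left 2))).add (h5.mul_left K)).add
    (h6.mul_left 2)).sub ((h7.mul_left 4).sub (h8.mul_left 4))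
  have hfun : (fun n : ℕ => ((n : ℝ) * T c n) * x ^ n - (((n : ℝ) - 1) * ((n : ℝ) * c n)) * x ^ n
      + (T c n * x ^ n - 2 * (((n : ℝ) * c n) * x ^ n)) + K * (c n * x ^ n) + 2 * (b n * x ^ n)
      - (4 * (T b n * x ^ n) - 4 * (((n : ℝ) * b n) * x ^ n))) = fun _ => (0 : ℝ) := by
    funext n
    have hr := hrec n
    have hT1 : T c n = ((n : ℝ) + 1) * c (n + 1) := rfl
    have hT2 : T b n = ((n : ℝ) + 1) * b (n + 1) := rfl
    rw [hT1, hT2]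
    have : ((n : ℝ) * (((n : ℝ) + 1) * c (n + 1))) * x ^ n
        - (((n : ℝ) - 1) * ((n : ℝ) * c n)) * x ^ n
        + ((((n : ℝ) + 1) * c (n + 1)) * x ^ n - 2 * (((n : ℝ) * c n) * x ^ n))
        + K * (c n * x ^ n) + 2 * (b n * x ^ n)
        - (4 * ((((n : ℝ) + 1) * b (n + 1)) * x ^ n) - 4 * (((n : ℝ) * b n) * x ^ n))
        = (((n : ℝ) + 1) ^ 2 * c (n + 1) - (((n : ℝ)) ^ 2 + (n : ℝ) - K) * c n
          - 4 * ((n : ℝ) + 1) * b (n + 1) + (4 * (n : ℝ) + 2) * b n) * x ^ n := by ring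
    rw [this, hr, zero_mul]
  rw [hfun] at H
  have := H.unique hasSum_zero
  -- match SS notation
  rw [SS, SS, SS, SS]
  convert this using 2

lemma phi_eq (hk : 1 ≤ k) {x : ℝ} (hx : |x| < 1) :
    phi k x = -2 * Real.log x * SS (A k) x + SS (E k) x := by
  have hA : SS (A k) x = ∑ n ∈ Finset.range k,
      (-1 : ℝ) ^ n * (Real.Gamma ((k : ℝ) + n) /
        (Real.Gamma ((k : ℝ) - n) * ((Nat.factorial n : ℝ)) ^ 2)) * x ^ n := by
    rw [SS, tsum_eq_sum (s := Finset.range k)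
      (fun n hn => by rw [A, if_neg (fun h => hn (Finset.mem_range.mpr h)), zero_mul])]
    apply Finset.sum_congr rfl
    intro n hn
    rw [A, if_pos (Finset.mem_range.mp hn), aa]
  have hsum : Summable fun n => E k n * x ^ n := (polyBnd_E hk).summable hx
  have hE : SS (E k) x
      = -(2 * ∑ n ∈ Finset.range k,
          (-1 : ℝ) ^ n * (Real.Gamma ((k : ℝ) + n) /
            (Real.Gamma ((k : ℝ) - n) * ((Nat.factorial n : ℝ)) ^ 2)) *
            (-2 * digamma ((n : ℝ) + 1) + digamma ((k : ℝ) + n) + digamma ((k : ℝ) - n)) * x ^ n)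
        + 2 * (-1 : ℝ) ^ k * ∑' m : ℕ,
          (Real.Gamma ((k : ℝ) + m + k) * Real.Gamma ((m : ℝ) + 1) /
            (Real.Gamma ((k : ℝ) + m + 1)) ^ 2) * x ^ (k + m) := by
    rw [SS, ← Summable.sum_add_tsum_nat_add k hsum]
    congr 1
    · rw [Finset.mul_sum, ← Finset.sum_neg_distrib]
      apply Finset.sum_congr rfl
      intro n hn
      rw [E, if_pos (Finset.mem_range.mp hn), aa, dd]
      ring
    · rw [← tsum_mul_left]
      apply tsum_congr
      intro m
      have h1 : ¬ (m + k < k) := by omega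
      rw [E, if_neg h1, tt]
      have g1 : Real.Gamma (((m + k : ℕ) : ℝ) + k) = Real.Gamma ((k : ℝ) + m + k) := by
        congr 1; push_cast; ring
      have g2 : Real.Gamma (((m + k : ℕ) : ℝ) - k + 1) = Real.Gamma ((m : ℝ) + 1) := by
        congr 1; push_cast; ring
      have g3 : Real.Gamma (((m + k : ℕ) : ℝ) + 1) = Real.Gamma ((k : ℝ) + m + 1) := by
        congr 1; push_cast; ring
      rw [g1, g2, g3, show m + k = k + m from Nat.add_comm m k]
      ring
  rw [phi, hA, hE]
  ring

end PhiOde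

open PhiOde in
/-- `φ_k` is twice differentiable on `(0,1)` and satisfies
`(x − x²)·φ_k'' + (1 − 2x)·φ_k' + k(k−1)·φ_k = 0` there. -/
theorem phi_ode (k : ℕ) (hk : 1 ≤ k) :
    ∀ x ∈ Set.Ioo (0 : ℝ) 1,
      DifferentiableAt ℝ (phi k) x ∧
      DifferentiableAt ℝ (deriv (phi k)) x ∧
      (x - x ^ 2) * deriv (deriv (phi k)) x + (1 - 2 * x) * deriv (phi k) x
        + (k : ℝ) * ((k : ℝ) - 1) * phi k x = 0 := by
  have habs : ∀ y : ℝ, y ∈ Set.Ioo (0 : ℝ) 1 → |y| < 1 := fun y hy =>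
    abs_lt.mpr ⟨by linarith [hy.1], hy.2⟩
  have pA : PolyBnd (A k) := polyBnd_A
  have pE : PolyBnd (E k) := polyBnd_E hk
  set N : ℝ → ℝ := fun y => -2 * Real.log y * SS (A k) y + SS (E k) y with hNdef
  set N1 : ℝ → ℝ := fun y =>
    -2 / y * SS (A k) y + -2 * Real.log y * SS (T (A k)) y + SS (T (E k)) y with hN1def
  have hNd : ∀ y ∈ Set.Ioo (0 : ℝ) 1, HasDerivAt N (N1 y) y := by
    intro y hy
    have hy0 : y ≠ 0 := ne_of_gt hy.1
    have h1 : HasDerivAt (fun z : ℝ => -2 * Real.log z) (-2 / y) y := by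
      have := (Real.hasDerivAt_log hy0).const_mul (-2 : ℝ)
      refine this.congr_deriv ?_; ring
    have hDA := hasDerivAt_SS pA (habs y hy)
    have hDE := hasDerivAt_SS pE (habs y hy)
    have := (h1.mul hDA).add hDE
    exact this
  have hN1d : ∀ y ∈ Set.Ioo (0 : ℝ) 1, HasDerivAt N1
      (2 / y ^ 2 * SS (A k) y - 4 / y * SS (T (A k)) y
        - 2 * Real.log y * SS (T (T (A k))) y + SS (T (T (E k))) y) y := by
    intro y hy
    have hy0 : y ≠ 0 := ne_of_gt hy.1
    have h1 : HasDerivAt (fun z : ℝ => -2 / z) (2 / y ^ 2) y := by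
      have := (hasDerivAt_inv hy0).const_mul (-2 : ℝ)
      have h2 : (fun z : ℝ => -2 / z) = fun z : ℝ => -2 * z⁻¹ := by
        funext z; rw [div_eq_mul_inv]
      rw [h2]
      refine this.congr_deriv ?_; ring
    have h2 : HasDerivAt (fun z : ℝ => -2 * Real.log z) (-2 / y) y := by
      have := (Real.hasDerivAt_log hy0).const_mul (-2 : ℝ)
      refine this.congr_deriv ?_; ring
    have hDA := hasDerivAt_SS pA (habs y hy)
    have hDTA := hasDerivAt_SS pA.shift (habs y hy)
    have hDTE := hasDerivAt_SS pE.shift (habs y hy)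
    have := ((h1.mul hDA).add (h2.mul hDTA)).add hDTE
    refine this.congr_deriv ?_
    ring
  intro x hx
  have hx0 : (0 : ℝ) < x := hx.1
  have hxne : x ≠ 0 := ne_of_gt hx0
  have hxa : |x| < 1 := habs x hx
  have hphiN : Set.EqOn (phi k) N (Set.Ioo (0 : ℝ) 1) := fun y hy => phi_eq hk (habs y hy)
  have hev : phi k =ᶠ[nhds x] N :=
    Filter.eventuallyEq_of_mem (isOpen_Ioo.mem_nhds hx) hphiN
  have hphiD : ∀ y ∈ Set.Ioo (0 : ℝ) 1, HasDerivAt (phi k) (N1 y) y := fun y hy =>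
    (hNd y hy).congr_of_eventuallyEq
      (Filter.eventuallyEq_of_mem (isOpen_Ioo.mem_nhds hy) hphiN)
  have hderiv1 : Set.EqOn (deriv (phi k)) N1 (Set.Ioo (0 : ℝ) 1) := fun y hy =>
    (hphiD y hy).deriv
  have hev2 : deriv (phi k) =ᶠ[nhds x] N1 :=
    Filter.eventuallyEq_of_mem (isOpen_Ioo.mem_nhds hx) hderiv1
  have hphiD2 : HasDerivAt (deriv (phi k))
      (2 / x ^ 2 * SS (A k) x - 4 / x * SS (T (A k)) x
        - 2 * Real.log x * SS (T (T (A k))) x + SS (T (T (E k))) x) x :=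
    (hN1d x hx).congr_of_eventuallyEq hev2
  refine ⟨(hphiD x hx).differentiableAt, hphiD2.differentiableAt, ?_⟩
  rw [hphiD2.deriv, hderiv1 hx, hphiN hx]
  -- the two key identities
  set K : ℝ := (k : ℝ) * ((k : ℝ) - 1) with hK
  have I1 : (x - x ^ 2) * SS (T (T (A k))) x + (1 - 2 * x) * SS (T (A k)) x
      + K * SS (A k) x = 0 := by
    have hz : PolyBnd (fun _ : ℕ => (0 : ℝ)) := ⟨0, le_refl 0, 0, fun n => by simp⟩
    have h := key_combo pA hz K (fun n => by
      have := recA (k := k) hk n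
      linear_combination this) hxa
    have hz1 : SS (fun _ : ℕ => (0 : ℝ)) x = 0 := by simp [SS]
    have hz2 : SS (T (fun _ : ℕ => (0 : ℝ))) x = 0 := by simp [SS, T]
    rw [hz1, hz2] at h
    linarith
  have I2 : (x - x ^ 2) * SS (T (T (E k))) x + (1 - 2 * x) * SS (T (E k)) x
      + K * SS (E k) x + 2 * SS (A k) x - 4 * (1 - x) * SS (T (A k)) x = 0 :=
    key_combo pE pA K (fun n => by
      have := recE (k := k) hk n
      linear_combination this) hxa
  set a := SS (A k) x
  set ta := SS (T (A k)) x
  set tta := SS (T (T (A k))) x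
  set e := SS (E k) x
  set te := SS (T (E k)) x
  set tte := SS (T (T (E k))) x
  set L := Real.log x
  simp only [div_eq_mul_inv, ← inv_pow]
  set u := x⁻¹ with hudef
  have hu : x * u = 1 := mul_inv_cancel₀ hxne
  linear_combination (-2 * L) * I1 + I2 + ((2 * u - 2 * (x * u - 1)) * a - 4 * (1 - x) * ta) * hu

end
end

section
/- For every integer k ≥ 1, the function Y(x) = √(x(1−x)) · φ_k(x) is twice differentiable on (0,1) and satisfies Y''(x) + (1/(4x²(1−x)²) + k(k−1)/(x(1−x))) · Y(x) = 0 for all x ∈ (0,1). -/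
noncomputable section

open Finset

lemma Gamma_deriv_add_one {x : ℝ} (hx : 0 < x) :
    deriv Real.Gamma (x + 1) = Real.Gamma x + x * deriv Real.Gamma x := by
  have hne : ∀ m : ℕ, x ≠ -m := by
    intro m
    have : (0:ℝ) ≤ m := Nat.cast_nonneg m
    nlinarith [hx]
  have hne' : ∀ m : ℕ, x + 1 ≠ -m := by
    intro m
    have : (0:ℝ) ≤ m := Nat.cast_nonneg m
    nlinarith [hx]
  have hΓ : HasDerivAt Real.Gamma (deriv Real.Gamma x) x :=
    (Real.differentiableAt_Gamma hne).hasDerivAt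
  have hΓ1 : HasDerivAt Real.Gamma (deriv Real.Gamma (x+1)) (x+1) :=
    (Real.differentiableAt_Gamma hne').hasDerivAt
  have h1 : HasDerivAt (fun t => Real.Gamma (t + 1)) (deriv Real.Gamma (x+1)) x := by
    simpa [Function.comp_def] using hΓ1.comp x ((hasDerivAt_id x).add_const 1)
  have h2 : HasDerivAt (fun t => t * Real.Gamma t)
      (1 * Real.Gamma x + x * deriv Real.Gamma x) x := (hasDerivAt_id x).mul hΓ
  have heq : (fun t => Real.Gamma (t + 1)) =ᶠ[nhds x] (fun t => t * Real.Gamma t) := by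
    filter_upwards [eventually_gt_nhds hx] with t ht
    exact Real.Gamma_add_one ht.ne'
  have := (h2.congr_of_eventuallyEq heq).unique h1
  rw [← this]; ring

lemma digamma_add_one {x : ℝ} (hx : 0 < x) :
    digamma (x + 1) = digamma x + 1 / x := by
  have hΓx : Real.Gamma x ≠ 0 := (Real.Gamma_pos_of_pos hx).ne'
  unfold digamma
  rw [Gamma_deriv_add_one hx, Real.Gamma_add_one hx.ne']
  field_simp
  ring

namespace SPO


/-- coefficient of the log-polynomial -/
def a (k n : ℕ) : ℝ :=
  (-1 : ℝ) ^ n * (Real.Gamma ((k : ℝ) + n) /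
    (Real.Gamma ((k : ℝ) - n) * ((Nat.factorial n : ℝ)) ^ 2))

def d (k n : ℕ) : ℝ :=
  -2 * digamma ((n : ℝ) + 1) + digamma ((k : ℝ) + n) + digamma ((k : ℝ) - n)

def b (k m : ℕ) : ℝ :=
  Real.Gamma ((k : ℝ) + m + k) * Real.Gamma ((m : ℝ) + 1) /
    (Real.Gamma ((k : ℝ) + m + 1)) ^ 2

lemma a_eq (k n : ℕ) (hk : 1 ≤ k) (hn : n < k) :
    a k n = (-1 : ℝ) ^ n * ((k + n - 1).factorial : ℝ) /
      (((k - 1 - n).factorial : ℝ) * ((n.factorial : ℝ)) ^ 2) := by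
  have h1 : (k : ℝ) + n = ((k + n - 1 : ℕ) : ℝ) + 1 := by
    have : 1 ≤ k + n := by omega
    push_cast [this]; ring
  have h2 : (k : ℝ) - n = ((k - 1 - n : ℕ) : ℝ) + 1 := by
    have h : k - 1 - n = k - 1 - n := rfl
    have : (((k - 1 - n : ℕ)) : ℝ) = (k : ℝ) - 1 - n := by
      have : n ≤ k - 1 := by omega
      push_cast [Nat.sub_sub, show 1 + n ≤ k by omega]; ring
    rw [this]; ring
  rw [a, h1, h2, Real.Gamma_nat_eq_factorial, Real.Gamma_nat_eq_factorial]
  ring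

lemma b_eq (k m : ℕ) (hk : 1 ≤ k) :
    b k m = (((2 * k + m - 1).factorial : ℝ) * (m.factorial : ℝ)) /
      (((k + m).factorial : ℝ)) ^ 2 := by
  have h1 : (k : ℝ) + m + k = ((2 * k + m - 1 : ℕ) : ℝ) + 1 := by
    push_cast [show 1 ≤ 2 * k + m by omega]; ring
  have h2 : (k : ℝ) + m + 1 = ((k + m : ℕ) : ℝ) + 1 := by push_cast; ring
  rw [b, h1, h2, Real.Gamma_nat_eq_factorial, Real.Gamma_nat_eq_factorial,
    Real.Gamma_nat_eq_factorial]

lemma a_succ (k n : ℕ) (hn : n + 1 < k) :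
    a k (n + 1) * ((n : ℝ) + 1) ^ 2 =
      ((n : ℝ) * ((n : ℝ) + 1) - (k : ℝ) * ((k : ℝ) - 1)) * a k n := by
  obtain ⟨j, rfl⟩ : ∃ j, k = n + 2 + j := ⟨k - (n + 2), by omega⟩
  rw [a_eq _ _ (by omega) (by omega), a_eq _ _ (by omega) (by omega)]
  rw [show n + 2 + j + (n + 1) - 1 = (n + 2 + j + n - 1) + 1 by omega,
    show n + 2 + j - 1 - n = j + 1 by omega,
    show n + 2 + j - 1 - (n + 1) = j by omega,
    show n + 2 + j + n - 1 = 2 * n + 1 + j by omega]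
  rw [Nat.factorial_succ, Nat.factorial_succ, Nat.factorial_succ]
  have e1 : ((j.factorial : ℝ)) ≠ 0 := Nat.cast_ne_zero.2 (Nat.factorial_ne_zero _)
  have e2 : ((n.factorial : ℝ)) ≠ 0 := Nat.cast_ne_zero.2 (Nat.factorial_ne_zero _)
  push_cast
  field_simp
  ring

lemma fact_cast_succ (A B : ℕ) (h : A = B + 1) :
    ((A.factorial : ℕ) : ℝ) = ((B : ℝ) + 1) * ((B.factorial : ℕ) : ℝ) := by
  subst h; rw [Nat.factorial_succ]; push_cast; ring

lemma b_succ (k m : ℕ) (hk : 1 ≤ k) :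
    b k (m + 1) * ((k : ℝ) + m + 1) ^ 2 =
      ((m : ℝ) + 1) * ((m : ℝ) + 2 * k) * b k m := by
  obtain ⟨j, rfl⟩ : ∃ j, k = 1 + j := ⟨k - 1, by omega⟩
  rw [b_eq _ _ (by omega), b_eq _ _ (by omega)]
  rw [show 2 * (1 + j) + (m + 1) - 1 = 2 * j + m + 2 by omega,
    show 2 * (1 + j) + m - 1 = 2 * j + m + 1 by omega,
    show 1 + j + (m + 1) = j + m + 2 by omega]
  rw [fact_cast_succ (2 * j + m + 2) (2 * j + m + 1) (by omega),
    fact_cast_succ (j + m + 2) (j + m + 1) (by omega),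
    fact_cast_succ (m + 1) m rfl,
    show 1 + j + m = j + m + 1 by omega]
  have e1 : (((j + m + 1).factorial : ℝ)) ≠ 0 := Nat.cast_ne_zero.2 (Nat.factorial_ne_zero _)
  have e2 : ((m.factorial : ℝ)) ≠ 0 := Nat.cast_ne_zero.2 (Nat.factorial_ne_zero _)
  push_cast
  field_simp
  ring

lemma d_succ (k n : ℕ) (hn : n + 1 < k) :
    d k (n + 1) = d k n - 2 / ((n : ℝ) + 1) + 1 / ((k : ℝ) + n) - 1 / ((k : ℝ) - 1 - n) := by
  have h1 : digamma (((n + 1 : ℕ) : ℝ) + 1) = digamma ((n : ℝ) + 1) + 1 / ((n : ℝ) + 1) := by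
    have := digamma_add_one (x := (n : ℝ) + 1) (by positivity)
    push_cast
    convert this using 2 <;> ring
  have h2 : digamma ((k : ℝ) + (n + 1 : ℕ)) = digamma ((k : ℝ) + n) + 1 / ((k : ℝ) + n) := by
    have hkn : (0 : ℝ) < (k : ℝ) + n := by
      have hc : (1 : ℝ) ≤ (k : ℝ) := by exact_mod_cast (show 1 ≤ k by omega)
      have hc2 : (0 : ℝ) ≤ (n : ℝ) := Nat.cast_nonneg n
      linarith
    have := digamma_add_one (x := (k : ℝ) + n) hkn
    push_cast
    convert this using 2 <;> ring
  have h3 : digamma ((k : ℝ) - n) = digamma ((k : ℝ) - (n + 1 : ℕ)) + 1 / ((k : ℝ) - 1 - n) := by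
    have hpos : (0 : ℝ) < (k : ℝ) - 1 - n := by
      have : (n : ℝ) + 2 ≤ k := by exact_mod_cast Nat.succ_le_of_lt hn
      linarith
    have := digamma_add_one (x := (k : ℝ) - 1 - n) hpos
    push_cast
    rw [show (k : ℝ) - 1 - n + 1 = (k : ℝ) - n by ring] at this
    rw [this, show (k : ℝ) - (n + 1) = (k : ℝ) - 1 - n by ring]
  rw [d, d, h1, h2, h3]
  ring

/-- the mixed recurrence for `c n = a n * d n` -/
lemma c_succ (k n : ℕ) (hn : n + 1 < k) :
    a k (n + 1) * d k (n + 1) * ((n : ℝ) + 1) ^ 2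
      + a k n * d k n * ((k : ℝ) * ((k : ℝ) - 1) - (n : ℝ) * ((n : ℝ) + 1)) =
    (2 * (n : ℝ) + 1) * a k n - 2 * ((n : ℝ) + 1) * a k (n + 1) := by
  have hd := d_succ k n hn
  have ha := a_succ k n hn
  have h1 : ((n : ℝ) + 1) ≠ 0 := by positivity
  have h2 : ((k : ℝ) + n) ≠ 0 := by
    have hc : (1 : ℝ) ≤ (k : ℝ) := by exact_mod_cast (show 1 ≤ k by omega)
    have hc2 : (0 : ℝ) ≤ (n : ℝ) := Nat.cast_nonneg n
    nlinarith
  have h3 : ((k : ℝ) - 1 - n) ≠ 0 := by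
    have : (n : ℝ) + 2 ≤ k := by exact_mod_cast Nat.succ_le_of_lt hn
    nlinarith
  have ha' : a k (n + 1) = ((n : ℝ) * ((n : ℝ) + 1) - (k : ℝ) * ((k : ℝ) - 1)) * a k n
      / ((n : ℝ) + 1) ^ 2 := by
    field_simp at ha ⊢
    linarith [ha]
  rw [hd, ha']
  field_simp
  ring

lemma boundary (k : ℕ) (hk : 1 ≤ k) :
    (2 * (k : ℝ) - 1) * a k (k - 1) = -(-1 : ℝ) ^ k * b k 0 * (k : ℝ) ^ 2 := by
  obtain ⟨j, rfl⟩ : ∃ j, k = 1 + j := ⟨k - 1, by omega⟩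
  rw [show 1 + j - 1 = j by omega]
  rw [a_eq _ _ (by omega) (by omega), b_eq _ _ (by omega)]
  rw [show 1 + j + j - 1 = 2 * j by omega, show 1 + j - 1 - j = 0 by omega,
    show 2 * (1 + j) + 0 - 1 = 2 * j + 1 by omega, show 1 + j + 0 = j + 1 by omega]
  rw [fact_cast_succ (2 * j + 1) (2 * j) (by omega), fact_cast_succ (j + 1) j rfl,
    Nat.factorial_zero, pow_succ]
  have e1 : ((j.factorial : ℝ)) ≠ 0 := Nat.cast_ne_zero.2 (Nat.factorial_ne_zero _)
  have e2 : (((2 * j).factorial : ℝ)) ≠ 0 := Nat.cast_ne_zero.2 (Nat.factorial_ne_zero _)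
  push_cast
  field_simp
  ring



lemma summable_aux (K : ℕ) {r : ℝ} (h0 : 0 ≤ r) (h1 : r < 1) :
    Summable (fun n : ℕ => ((n : ℝ) + 1) ^ K * r ^ n) := by
  rcases eq_or_lt_of_le h0 with h | h
  · apply summable_of_ne_finset_zero (s := {0})
    intro n hn
    simp only [Finset.mem_singleton] at hn
    rw [← h, zero_pow hn, mul_zero]
  · have hb : Summable (fun n : ℕ => (n : ℝ) ^ K * r ^ n) :=
      summable_pow_mul_geometric_of_norm_lt_one K
        (by rwa [Real.norm_eq_abs, abs_of_nonneg h0])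
    have h2 : Summable (fun n : ℕ => ((n + 1 : ℕ) : ℝ) ^ K * r ^ (n + 1)) :=
      (summable_nat_add_iff 1).2 hb
    have h3 := h2.mul_left (1 / r)
    apply h3.congr
    intro n
    push_cast
    field_simp
    ring

lemma summable_pow_series (c : ℕ → ℝ) (p : ℕ → ℕ) (C : ℝ) (K : ℕ)
    (hp1 : ∀ n, n ≤ p n) (hc : ∀ n, |c n| ≤ C * ((n : ℝ) + 1) ^ K)
    {x : ℝ} (hx : |x| < 1) :
    Summable (fun n => c n * x ^ p n) := by
  refine Summable.of_norm_bounded (g := fun n : ℕ => C * (((n : ℝ) + 1) ^ K * |x| ^ n))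
    (((summable_aux K (abs_nonneg x) hx)).mul_left C) (fun n => ?_)
  have h1 : 0 ≤ C * ((n : ℝ) + 1) ^ K := le_trans (abs_nonneg _) (hc n)
  calc ‖c n * x ^ p n‖ = |c n| * |x| ^ p n := by
        rw [norm_mul, Real.norm_eq_abs, Real.norm_eq_abs, abs_pow]
    _ ≤ (C * ((n : ℝ) + 1) ^ K) * |x| ^ p n :=
        mul_le_mul_of_nonneg_right (hc n) (by positivity)
    _ ≤ (C * ((n : ℝ) + 1) ^ K) * |x| ^ n := by
        apply mul_le_mul_of_nonneg_left _ h1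
        exact pow_le_pow_of_le_one (abs_nonneg x) hx.le (hp1 n)
    _ = C * (((n : ℝ) + 1) ^ K * |x| ^ n) := by ring

lemma hasDerivAt_pow_series (c : ℕ → ℝ) (p : ℕ → ℕ) (C : ℝ) (K B : ℕ)
    (hp1 : ∀ n, n ≤ p n) (hp2 : ∀ n, p n ≤ n + B)
    (hc : ∀ n, |c n| ≤ C * ((n : ℝ) + 1) ^ K)
    {x : ℝ} (hx : |x| < 1) :
    HasDerivAt (fun y : ℝ => ∑' n, c n * y ^ p n)
      (∑' n, c n * (p n : ℝ) * x ^ (p n - 1)) x := by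
  set r : ℝ := (1 + |x|) / 2 with hr
  have hr0 : 0 < r := by positivity
  have hr1 : r < 1 := by rw [hr]; linarith [hx]
  have hxr : |x| < r := by rw [hr]; linarith [abs_nonneg x]
  have hC : 0 ≤ C := by
    have := le_trans (abs_nonneg (c 0)) (hc 0); simpa using this
  set u : ℕ → ℝ := fun n => C * ((n : ℝ) + 1) ^ K * ((n : ℝ) + B) * r ^ (n - 1) with hu
  have hu_sum : Summable u := by
    refine Summable.of_nonneg_of_le (fun n => ?_) (fun n => ?_)
      ((summable_aux (K + 1) hr0.le hr1).mul_left (C * ((B : ℝ) + 1) / r))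
    · rw [hu]; positivity
    · show C * ((n : ℝ) + 1) ^ K * ((n : ℝ) + B) * r ^ (n - 1)
          ≤ C * ((B : ℝ) + 1) / r * (((n : ℝ) + 1) ^ (K + 1) * r ^ n)
      rw [div_mul_eq_mul_div, le_div_iff₀ hr0]
      have e2 : r ^ (n - 1) * r ≤ r ^ n := by
        rcases Nat.eq_zero_or_pos n with h | h
        · subst h; simpa using hr1.le
        · have hn : n - 1 + 1 = n := by omega
          rw [← hn, pow_succ, hn]
      have e1 : (n : ℝ) + B ≤ ((B : ℝ) + 1) * ((n : ℝ) + 1) := by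
        nlinarith [Nat.cast_nonneg (α := ℝ) n, Nat.cast_nonneg (α := ℝ) B]
      calc C * ((n : ℝ) + 1) ^ K * ((n : ℝ) + B) * r ^ (n - 1) * r
          = (C * ((n : ℝ) + 1) ^ K * ((n : ℝ) + B)) * (r ^ (n - 1) * r) := by ring
        _ ≤ (C * ((n : ℝ) + 1) ^ K * ((n : ℝ) + B)) * r ^ n :=
            mul_le_mul_of_nonneg_left e2 (by positivity)
        _ ≤ (C * ((n : ℝ) + 1) ^ K * (((B : ℝ) + 1) * ((n : ℝ) + 1))) * r ^ n := by
            apply mul_le_mul_of_nonneg_right _ (by positivity)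
            exact mul_le_mul_of_nonneg_left e1 (by positivity)
        _ = C * ((B : ℝ) + 1) * (((n : ℝ) + 1) ^ (K + 1) * r ^ n) := by ring
  have key := hasDerivAt_tsum_of_isPreconnected hu_sum (isOpen_Ioo (a := -r) (b := r))
    (convex_Ioo (-r) r).isPreconnected
    (g := fun n y => c n * y ^ p n) (g' := fun n y => c n * (p n : ℝ) * y ^ (p n - 1))
    ?_ ?_ (y₀ := 0) ?_ ?_ (y := x) ?_
  · exact key
  · intro n y _
    have := (hasDerivAt_pow (p n) y).const_mul (c n)
    simpa [mul_assoc] using this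
  · intro n y hy
    have hyr : |y| ≤ r := by
      rw [abs_le]; exact ⟨(Set.mem_Ioo.1 hy).1.le, (Set.mem_Ioo.1 hy).2.le⟩
    have f1 := hc n
    have f2 : ((p n : ℕ) : ℝ) ≤ (n : ℝ) + B := by exact_mod_cast hp2 n
    have f3 : |y| ^ (p n - 1) ≤ r ^ (n - 1) :=
      le_trans (pow_le_pow_left₀ (abs_nonneg y) hyr _)
        (pow_le_pow_of_le_one hr0.le hr1.le (by have := hp1 n; omega))
    have A1 : |c n| * ((p n : ℕ) : ℝ) ≤ (C * ((n : ℝ) + 1) ^ K) * ((n : ℝ) + B) :=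
      mul_le_mul f1 f2 (Nat.cast_nonneg _) (le_trans (abs_nonneg _) (hc n))
    rw [hu, Real.norm_eq_abs]
    calc |c n * ((p n : ℕ) : ℝ) * y ^ (p n - 1)|
        = |c n| * ((p n : ℕ) : ℝ) * |y| ^ (p n - 1) := by
          rw [abs_mul, abs_mul, abs_pow, Nat.abs_cast]
      _ ≤ (C * ((n : ℝ) + 1) ^ K) * ((n : ℝ) + B) * r ^ (n - 1) :=
          mul_le_mul A1 f3 (by positivity) (by positivity)
      _ = C * ((n : ℝ) + 1) ^ K * ((n : ℝ) + B) * r ^ (n - 1) := by ring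
  · exact Set.mem_Ioo.2 ⟨by linarith, hr0⟩
  · apply summable_of_ne_finset_zero (s := {0})
    intro n hn
    simp only [Finset.mem_singleton] at hn
    have hpn : p n ≠ 0 := by have := hp1 n; omega
    show c n * (0 : ℝ) ^ p n = 0
    rw [zero_pow hpn, mul_zero]
  · exact Set.mem_Ioo.2 ⟨by linarith [neg_abs_le x], by linarith [le_abs_self x]⟩


lemma summable_pow_series' (c : ℕ → ℝ) (p : ℕ → ℕ) (C : ℝ) (K L : ℕ)
    (hp1 : ∀ n, n ≤ p n + L) (hc : ∀ n, |c n| ≤ C * ((n : ℝ) + 1) ^ K)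
    {x : ℝ} (hx : |x| < 1) :
    Summable (fun n => c n * x ^ p n) := by
  have hg : Summable (fun n : ℕ => C * ((n : ℝ) + 1) ^ K * |x| ^ (n - L)) := by
    rw [← summable_nat_add_iff L]
    refine Summable.of_norm_bounded
      (g := fun n : ℕ => (C * ((L : ℝ) + 1) ^ K) * (((n : ℝ) + 1) ^ K * |x| ^ n))
      ((summable_aux K (abs_nonneg x) hx).mul_left _) (fun n => ?_)
    have hC : 0 ≤ C := by
      have := le_trans (abs_nonneg (c 0)) (hc 0); simpa using this
    have h1 : ((n + L : ℕ) : ℝ) + 1 ≤ ((L : ℝ) + 1) * ((n : ℝ) + 1) := by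
      push_cast
      nlinarith [Nat.cast_nonneg (α := ℝ) n, Nat.cast_nonneg (α := ℝ) L]
    rw [Real.norm_eq_abs, Nat.add_sub_cancel]
    rw [abs_of_nonneg (by positivity)]
    calc C * (((n + L : ℕ) : ℝ) + 1) ^ K * |x| ^ n
        ≤ C * (((L : ℝ) + 1) * ((n : ℝ) + 1)) ^ K * |x| ^ n := by
          apply mul_le_mul_of_nonneg_right _ (by positivity)
          exact mul_le_mul_of_nonneg_left (pow_le_pow_left₀ (by positivity) h1 K) hC
      _ = C * ((L : ℝ) + 1) ^ K * (((n : ℝ) + 1) ^ K * |x| ^ n) := by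
          rw [mul_pow]; ring
  refine Summable.of_norm_bounded hg (fun n => ?_)
  have h1 : 0 ≤ C * ((n : ℝ) + 1) ^ K := le_trans (abs_nonneg _) (hc n)
  calc ‖c n * x ^ p n‖ = |c n| * |x| ^ p n := by
        rw [norm_mul, Real.norm_eq_abs, Real.norm_eq_abs, abs_pow]
    _ ≤ (C * ((n : ℝ) + 1) ^ K) * |x| ^ p n :=
        mul_le_mul_of_nonneg_right (hc n) (by positivity)
    _ ≤ (C * ((n : ℝ) + 1) ^ K) * |x| ^ (n - L) := by
        apply mul_le_mul_of_nonneg_left _ h1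
        exact pow_le_pow_of_le_one (abs_nonneg x) hx.le (by have := hp1 n; omega)
def U (k : ℕ) (x : ℝ) : ℝ := ∑ n ∈ range k, a k n * x ^ n
def U1 (k : ℕ) (x : ℝ) : ℝ := ∑ n ∈ range k, a k n * (n : ℝ) * x ^ (n - 1)
def U2 (k : ℕ) (x : ℝ) : ℝ :=
  ∑ n ∈ range k, a k n * (n : ℝ) * ((n - 1 : ℕ) : ℝ) * x ^ (n - 1 - 1)
def W (k : ℕ) (x : ℝ) : ℝ := ∑ n ∈ range k, a k n * d k n * x ^ n
def W1 (k : ℕ) (x : ℝ) : ℝ := ∑ n ∈ range k, a k n * d k n * (n : ℝ) * x ^ (n - 1)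
def W2 (k : ℕ) (x : ℝ) : ℝ :=
  ∑ n ∈ range k, a k n * d k n * (n : ℝ) * ((n - 1 : ℕ) : ℝ) * x ^ (n - 1 - 1)
def G (k : ℕ) (x : ℝ) : ℝ := ∑' m : ℕ, b k m * x ^ (k + m)
def G1 (k : ℕ) (x : ℝ) : ℝ := ∑' m : ℕ, b k m * ((k + m : ℕ) : ℝ) * x ^ (k + m - 1)
def G2 (k : ℕ) (x : ℝ) : ℝ :=
  ∑' m : ℕ, b k m * ((k + m : ℕ) : ℝ) * ((k + m - 1 : ℕ) : ℝ) * x ^ (k + m - 1 - 1)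


lemma fact_add_le (n : ℕ) : ∀ i, (n + i).factorial ≤ n.factorial * (n + i) ^ i := by
  intro i
  induction i with
  | zero => simp
  | succ i ih =>
      rw [show n + (i + 1) = (n + i) + 1 by omega, Nat.factorial_succ]
      calc (n + i + 1) * (n + i).factorial ≤ (n + i + 1) * (n.factorial * (n + i) ^ i) :=
            Nat.mul_le_mul_left _ ih
        _ ≤ (n + i + 1) * (n.factorial * (n + i + 1) ^ i) := by
            apply Nat.mul_le_mul_left
            exact Nat.mul_le_mul_left _ (Nat.pow_le_pow_left (by omega) i)
        _ = n.factorial * (n + i + 1) ^ (i + 1) := by ring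
  
lemma b_nonneg (k m : ℕ) (hk : 1 ≤ k) : 0 ≤ b k m := by
  rw [b_eq k m hk]; positivity

lemma b_bound (k : ℕ) (hk : 1 ≤ k) (m : ℕ) :
    |b k m| ≤ ((2 * k : ℝ)) ^ (2 * k) * ((m : ℝ) + 1) ^ (2 * k) := by
  rw [abs_of_nonneg (b_nonneg k m hk), b_eq k m hk]
  have hden : (0 : ℝ) < (((k + m).factorial : ℝ)) ^ 2 := by positivity
  rw [div_le_iff₀ hden]
  have NB : (2 * k + m - 1).factorial * m.factorial
      ≤ ((k + m).factorial) ^ 2 * (2 * k * (m + 1)) ^ (2 * k) := by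
    have h1 : (2 * k + m - 1).factorial ≤ (k + m).factorial * (2 * k + m - 1) ^ (k - 1) := by
      have := fact_add_le (k + m) (k - 1)
      rwa [show k + m + (k - 1) = 2 * k + m - 1 by omega] at this
    have h2 : m.factorial ≤ (k + m).factorial := Nat.factorial_le (by omega)
    have h3 : (2 * k + m - 1) ^ (k - 1) ≤ (2 * k * (m + 1)) ^ (2 * k) := by
      have hb : 2 * k + m - 1 ≤ 2 * k * (m + 1) := by
        calc 2 * k + m - 1 ≤ 2 * k + m := Nat.sub_le _ _
          _ ≤ 2 * k * (m + 1) := by nlinarith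
      calc (2 * k + m - 1) ^ (k - 1) ≤ (2 * k * (m + 1)) ^ (k - 1) :=
            Nat.pow_le_pow_left hb _
        _ ≤ (2 * k * (m + 1)) ^ (2 * k) :=
            Nat.pow_le_pow_right (by positivity) (by omega)
    calc (2 * k + m - 1).factorial * m.factorial
        ≤ ((k + m).factorial * (2 * k + m - 1) ^ (k - 1)) * (k + m).factorial :=
          Nat.mul_le_mul h1 h2
      _ ≤ ((k + m).factorial * (2 * k * (m + 1)) ^ (2 * k)) * (k + m).factorial := by
          apply Nat.mul_le_mul_right
          exact Nat.mul_le_mul_left _ h3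
      _ = ((k + m).factorial) ^ 2 * (2 * k * (m + 1)) ^ (2 * k) := by ring
  have := (Nat.cast_le (α := ℝ)).2 NB
  push_cast at this
  calc (((2 * k + m - 1).factorial : ℝ)) * (m.factorial : ℝ)
      ≤ (((k + m).factorial : ℝ)) ^ 2 * (2 * (k : ℝ) * ((m : ℝ) + 1)) ^ (2 * k) := this
    _ = (2 * (k : ℝ)) ^ (2 * k) * ((m : ℝ) + 1) ^ (2 * k) * (((k + m).factorial : ℝ)) ^ 2 := by
        rw [mul_pow]; ring

lemma bk_cast_bound (k : ℕ) (hk : 1 ≤ k) (m : ℕ) :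
    |b k m * ((k + m : ℕ) : ℝ)| ≤ (2 * (k : ℝ)) ^ (2 * k + 1) * ((m : ℝ) + 1) ^ (2 * k + 1) := by
  rw [abs_mul, Nat.abs_cast]
  have h1 := b_bound k hk m
  have h2 : ((k + m : ℕ) : ℝ) ≤ 2 * (k : ℝ) * ((m : ℝ) + 1) := by
    push_cast
    have : (1 : ℝ) ≤ (k : ℝ) := by exact_mod_cast hk
    nlinarith [Nat.cast_nonneg (α := ℝ) m]
  calc |b k m| * ((k + m : ℕ) : ℝ)
      ≤ ((2 * k : ℝ)) ^ (2 * k) * ((m : ℝ) + 1) ^ (2 * k) * (2 * (k : ℝ) * ((m : ℝ) + 1)) :=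
        mul_le_mul h1 h2 (Nat.cast_nonneg _) (by positivity)
    _ = (2 * (k : ℝ)) ^ (2 * k + 1) * ((m : ℝ) + 1) ^ (2 * k + 1) := by
        rw [pow_succ, pow_succ]; push_cast; ring

lemma hasDerivAt_G (k : ℕ) (hk : 1 ≤ k) {x : ℝ} (hx : |x| < 1) :
    HasDerivAt (G k) (G1 k x) x := by
  have := hasDerivAt_pow_series (fun m => b k m) (fun m => k + m)
    (((2 * k : ℝ)) ^ (2 * k)) (2 * k) k (fun m => by show m ≤ k + m; omega)
    (fun m => by show k + m ≤ m + k; omega) (fun m => b_bound k hk m) hx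
  exact this

lemma hasDerivAt_G1 (k : ℕ) (hk : 1 ≤ k) {x : ℝ} (hx : |x| < 1) :
    HasDerivAt (G1 k) (G2 k x) x := by
  have := hasDerivAt_pow_series (fun m => b k m * ((k + m : ℕ) : ℝ)) (fun m => k + m - 1)
    ((2 * (k : ℝ)) ^ (2 * k + 1)) (2 * k + 1) k (fun m => by show m ≤ k + m - 1; omega)
    (fun m => by show k + m - 1 ≤ m + k; omega) (fun m => bk_cast_bound k hk m) hx
  exact this

lemma summable_G (k : ℕ) (hk : 1 ≤ k) {x : ℝ} (hx : |x| < 1) :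
    Summable (fun m => b k m * x ^ (k + m)) :=
  summable_pow_series (fun m => b k m) (fun m => k + m) (((2 * k : ℝ)) ^ (2 * k)) (2 * k)
    (fun m => by show m ≤ k + m; omega) (fun m => b_bound k hk m) hx


lemma bk2_cast_bound (k : ℕ) (hk : 1 ≤ k) (m : ℕ) :
    |b k m * ((k + m : ℕ) : ℝ) * ((k + m - 1 : ℕ) : ℝ)|
      ≤ (2 * (k : ℝ)) ^ (2 * k + 2) * ((m : ℝ) + 1) ^ (2 * k + 2) := by
  rw [abs_mul, Nat.abs_cast]
  have h1 := bk_cast_bound k hk m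
  have h2 : ((k + m - 1 : ℕ) : ℝ) ≤ 2 * (k : ℝ) * ((m : ℝ) + 1) := by
    have hle : ((k + m - 1 : ℕ) : ℝ) ≤ ((k + m : ℕ) : ℝ) := by
      exact_mod_cast Nat.sub_le _ _
    refine le_trans hle ?_
    push_cast
    have : (1 : ℝ) ≤ (k : ℝ) := by exact_mod_cast hk
    nlinarith [Nat.cast_nonneg (α := ℝ) m]
  calc |b k m * ((k + m : ℕ) : ℝ)| * ((k + m - 1 : ℕ) : ℝ)
      ≤ (2 * (k : ℝ)) ^ (2 * k + 1) * ((m : ℝ) + 1) ^ (2 * k + 1)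
          * (2 * (k : ℝ) * ((m : ℝ) + 1)) :=
        mul_le_mul h1 h2 (Nat.cast_nonneg _) (by positivity)
    _ = (2 * (k : ℝ)) ^ (2 * k + 2) * ((m : ℝ) + 1) ^ (2 * k + 2) := by
        rw [pow_succ, pow_succ]; ring

lemma bksq_cast_bound (k : ℕ) (hk : 1 ≤ k) (m : ℕ) :
    |b k m * (((k + m : ℕ) : ℝ)) ^ 2|
      ≤ (2 * (k : ℝ)) ^ (2 * k + 2) * ((m : ℝ) + 1) ^ (2 * k + 2) := by
  rw [abs_mul]
  have h1 := b_bound k hk m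
  have h2 : |(((k + m : ℕ) : ℝ)) ^ 2| ≤ (2 * (k : ℝ) * ((m : ℝ) + 1)) ^ 2 := by
    rw [abs_pow, Nat.abs_cast]
    apply pow_le_pow_left₀ (Nat.cast_nonneg _)
    push_cast
    have : (1 : ℝ) ≤ (k : ℝ) := by exact_mod_cast hk
    nlinarith [Nat.cast_nonneg (α := ℝ) m]
  calc |b k m| * |(((k + m : ℕ) : ℝ)) ^ 2|
      ≤ ((2 * k : ℝ)) ^ (2 * k) * ((m : ℝ) + 1) ^ (2 * k)
          * (2 * (k : ℝ) * ((m : ℝ) + 1)) ^ 2 :=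
        mul_le_mul h1 h2 (abs_nonneg _) (by positivity)
    _ = (2 * (k : ℝ)) ^ (2 * k + 2) * ((m : ℝ) + 1) ^ (2 * k + 2) := by
        rw [pow_add, mul_pow]; push_cast; ring

lemma term_identity (k m : ℕ) (hk : 1 ≤ k) (x : ℝ) :
    x * (1 - x) * (b k m * ((k + m : ℕ) : ℝ) * ((k + m - 1 : ℕ) : ℝ) * x ^ (k + m - 1 - 1))
      + (1 - 2 * x) * (b k m * ((k + m : ℕ) : ℝ) * x ^ (k + m - 1))
      + (k : ℝ) * ((k : ℝ) - 1) * (b k m * x ^ (k + m))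
    = b k m * (((k + m : ℕ) : ℝ)) ^ 2 * x ^ (k + m - 1)
      + b k m * ((k : ℝ) * ((k : ℝ) - 1) - ((k + m : ℕ) : ℝ) * (((k + m : ℕ) : ℝ) + 1))
          * x ^ (k + m) := by
  obtain ⟨N, hN⟩ : ∃ N, k + m = N + 1 := ⟨k + m - 1, by omega⟩
  rw [hN, Nat.add_sub_cancel]
  cases N with
  | zero => push_cast; simp; ring
  | succ j =>
      rw [Nat.add_sub_cancel]
      push_cast
      ring

lemma shift_zero (k m : ℕ) (hk : 1 ≤ k) (x : ℝ) :
    b k (m + 1) * (((k + (m + 1) : ℕ) : ℝ)) ^ 2 * x ^ (k + (m + 1) - 1)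
      + b k m * ((k : ℝ) * ((k : ℝ) - 1) - ((k + m : ℕ) : ℝ) * (((k + m : ℕ) : ℝ) + 1))
          * x ^ (k + m) = 0 := by
  have hb := b_succ k m hk
  rw [show k + (m + 1) - 1 = k + m by omega]
  have hc : (((k + (m + 1) : ℕ) : ℝ)) = (k : ℝ) + m + 1 := by push_cast; ring
  rw [hc]
  have hc2 : (((k + m : ℕ) : ℝ)) = (k : ℝ) + m := by push_cast; ring
  rw [hc2]
  linear_combination x ^ (k + m) * hb

set_option maxHeartbeats 2000000 in
lemma LG (k : ℕ) (hk : 1 ≤ k) {x : ℝ} (hx : |x| < 1) :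
    x * (1 - x) * G2 k x + (1 - 2 * x) * G1 k x + (k : ℝ) * ((k : ℝ) - 1) * G k x
      = (k : ℝ) ^ 2 * b k 0 * x ^ (k - 1) := by
  have CB := (2 * (k : ℝ)) ^ (2 * k + 2)
  have S0 : Summable (fun m => b k m * x ^ (k + m)) := summable_G k hk hx
  have S1 : Summable (fun m => b k m * ((k + m : ℕ) : ℝ) * x ^ (k + m - 1)) :=
    summable_pow_series' (fun m => b k m * ((k + m : ℕ) : ℝ)) (fun m => k + m - 1)
      ((2 * (k : ℝ)) ^ (2 * k + 1)) (2 * k + 1) 1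
      (fun m => by show m ≤ k + m - 1 + 1; omega) (fun m => bk_cast_bound k hk m) hx
  have S2 : Summable
      (fun m => b k m * ((k + m : ℕ) : ℝ) * ((k + m - 1 : ℕ) : ℝ) * x ^ (k + m - 1 - 1)) :=
    summable_pow_series' (fun m => b k m * ((k + m : ℕ) : ℝ) * ((k + m - 1 : ℕ) : ℝ))
      (fun m => k + m - 1 - 1) ((2 * (k : ℝ)) ^ (2 * k + 2)) (2 * k + 2) 2
      (fun m => by show m ≤ k + m - 1 - 1 + 2; omega) (fun m => bk2_cast_bound k hk m) hx
  have hA : Summable (fun m => b k m * (((k + m : ℕ) : ℝ)) ^ 2 * x ^ (k + m - 1)) :=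
    summable_pow_series' (fun m => b k m * (((k + m : ℕ) : ℝ)) ^ 2) (fun m => k + m - 1)
      ((2 * (k : ℝ)) ^ (2 * k + 2)) (2 * k + 2) 1
      (fun m => by show m ≤ k + m - 1 + 1; omega) (fun m => bksq_cast_bound k hk m) hx
  -- the combined series
  have SF : Summable (fun m =>
      x * (1 - x) * (b k m * ((k + m : ℕ) : ℝ) * ((k + m - 1 : ℕ) : ℝ) * x ^ (k + m - 1 - 1))
      + (1 - 2 * x) * (b k m * ((k + m : ℕ) : ℝ) * x ^ (k + m - 1))
      + (k : ℝ) * ((k : ℝ) - 1) * (b k m * x ^ (k + m))) :=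
    ((S2.mul_left _).add (S1.mul_left _)).add (S0.mul_left _)
  have hB : Summable (fun m => b k m
      * ((k : ℝ) * ((k : ℝ) - 1) - ((k + m : ℕ) : ℝ) * (((k + m : ℕ) : ℝ) + 1))
      * x ^ (k + m)) := by
    have := SF.sub hA
    apply this.congr
    intro m
    have h := term_identity k m hk x
    linarith [h]
  have step1 : x * (1 - x) * G2 k x + (1 - 2 * x) * G1 k x
      + (k : ℝ) * ((k : ℝ) - 1) * G k x = ∑' m,
      (x * (1 - x) * (b k m * ((k + m : ℕ) : ℝ) * ((k + m - 1 : ℕ) : ℝ) * x ^ (k + m - 1 - 1))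
      + (1 - 2 * x) * (b k m * ((k + m : ℕ) : ℝ) * x ^ (k + m - 1))
      + (k : ℝ) * ((k : ℝ) - 1) * (b k m * x ^ (k + m))) := by
    rw [Summable.tsum_add ((S2.mul_left _).add (S1.mul_left _)) (S0.mul_left _),
      Summable.tsum_add (S2.mul_left _) (S1.mul_left _), tsum_mul_left, tsum_mul_left,
      tsum_mul_left, G, G1, G2]
  have step2 : (∑' m,
      (x * (1 - x) * (b k m * ((k + m : ℕ) : ℝ) * ((k + m - 1 : ℕ) : ℝ) * x ^ (k + m - 1 - 1))
      + (1 - 2 * x) * (b k m * ((k + m : ℕ) : ℝ) * x ^ (k + m - 1))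
      + (k : ℝ) * ((k : ℝ) - 1) * (b k m * x ^ (k + m))))
      = ∑' m, (b k m * (((k + m : ℕ) : ℝ)) ^ 2 * x ^ (k + m - 1)
        + b k m * ((k : ℝ) * ((k : ℝ) - 1) - ((k + m : ℕ) : ℝ) * (((k + m : ℕ) : ℝ) + 1))
            * x ^ (k + m)) := by
    apply tsum_congr
    intro m
    exact term_identity k m hk x
  rw [step1]
  rw [step2]
  rw [Summable.tsum_add hA hB]
  rw [Summable.tsum_eq_zero_add hA]
  have hA' : Summable (fun m => b k (m + 1) * (((k + (m + 1) : ℕ) : ℝ)) ^ 2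
      * x ^ (k + (m + 1) - 1)) := (summable_nat_add_iff 1).2 hA
  have final : (∑' m, b k (m + 1) * (((k + (m + 1) : ℕ) : ℝ)) ^ 2 * x ^ (k + (m + 1) - 1))
      + ∑' m, (b k m * ((k : ℝ) * ((k : ℝ) - 1) - ((k + m : ℕ) : ℝ)
          * (((k + m : ℕ) : ℝ) + 1)) * x ^ (k + m)) = 0 := by
    rw [← Summable.tsum_add hA' hB]
    have : ∀ m : ℕ, b k (m + 1) * (((k + (m + 1) : ℕ) : ℝ)) ^ 2 * x ^ (k + (m + 1) - 1)
        + b k m * ((k : ℝ) * ((k : ℝ) - 1) - ((k + m : ℕ) : ℝ) * (((k + m : ℕ) : ℝ) + 1))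
          * x ^ (k + m) = 0 := fun m => shift_zero k m hk x
    rw [tsum_congr this, tsum_zero]
  have e0 : b k 0 * (((k + 0 : ℕ) : ℝ)) ^ 2 * x ^ (k + 0 - 1)
      = (k : ℝ) ^ 2 * b k 0 * x ^ (k - 1) := by
    simp only [Nat.add_zero]
    ring
  linarith [final, e0]


lemma mono_identity (c x Kc : ℝ) (n : ℕ) :
    x * (1 - x) * (c * (n : ℝ) * ((n - 1 : ℕ) : ℝ) * x ^ (n - 1 - 1))
      + (1 - 2 * x) * (c * (n : ℝ) * x ^ (n - 1)) + Kc * (c * x ^ n)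
    = c * (n : ℝ) ^ 2 * x ^ (n - 1) + c * (Kc - (n : ℝ) * ((n : ℝ) + 1)) * x ^ n := by
  cases n with
  | zero => simp; ring
  | succ j =>
      rw [Nat.add_sub_cancel]
      cases j with
      | zero => simp; ring
      | succ i =>
          rw [Nat.add_sub_cancel]
          push_cast
          ring

lemma L_poly (c : ℕ → ℝ) (Kc x : ℝ) (K0 : ℕ) :
    x * (1 - x) * (∑ n ∈ range (K0 + 1), c n * (n : ℝ) * ((n - 1 : ℕ) : ℝ) * x ^ (n - 1 - 1))
      + (1 - 2 * x) * (∑ n ∈ range (K0 + 1), c n * (n : ℝ) * x ^ (n - 1))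
      + Kc * (∑ n ∈ range (K0 + 1), c n * x ^ n)
    = (∑ n ∈ range K0, (c (n + 1) * ((n : ℝ) + 1) ^ 2
        + c n * (Kc - (n : ℝ) * ((n : ℝ) + 1))) * x ^ n)
      + c K0 * (Kc - (K0 : ℝ) * ((K0 : ℝ) + 1)) * x ^ K0 := by
  rw [Finset.mul_sum, Finset.mul_sum, Finset.mul_sum, ← Finset.sum_add_distrib,
    ← Finset.sum_add_distrib]
  have h1 : ∀ n ∈ range (K0 + 1),
      x * (1 - x) * (c n * (n : ℝ) * ((n - 1 : ℕ) : ℝ) * x ^ (n - 1 - 1))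
        + (1 - 2 * x) * (c n * (n : ℝ) * x ^ (n - 1)) + Kc * (c n * x ^ n)
      = c n * (n : ℝ) ^ 2 * x ^ (n - 1) + c n * (Kc - (n : ℝ) * ((n : ℝ) + 1)) * x ^ n :=
    fun n _ => mono_identity (c n) x Kc n
  rw [Finset.sum_congr rfl h1, Finset.sum_add_distrib]
  have h2 : ∑ n ∈ range (K0 + 1), c n * (n : ℝ) ^ 2 * x ^ (n - 1)
      = ∑ n ∈ range K0, c (n + 1) * ((n : ℝ) + 1) ^ 2 * x ^ n := by
    rw [Finset.sum_range_succ']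
    norm_num [Nat.add_sub_cancel]
    all_goals
      apply Finset.sum_congr rfl
      intro n _
      push_cast
      ring
  have h3 : ∑ n ∈ range (K0 + 1), c n * (Kc - (n : ℝ) * ((n : ℝ) + 1)) * x ^ n
      = (∑ n ∈ range K0, c n * (Kc - (n : ℝ) * ((n : ℝ) + 1)) * x ^ n)
        + c K0 * (Kc - (K0 : ℝ) * ((K0 : ℝ) + 1)) * x ^ K0 :=
    Finset.sum_range_succ _ _
  rw [h2, h3]
  rw [← add_assoc]
  congr 1
  rw [← Finset.sum_add_distrib]
  apply Finset.sum_congr rfl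
  intro n _
  ring

-- specialization to u
lemma L_u (k : ℕ) (hk : 1 ≤ k) (x : ℝ) :
    x * (1 - x) * (∑ n ∈ range k, a k n * (n : ℝ) * ((n - 1 : ℕ) : ℝ) * x ^ (n - 1 - 1))
      + (1 - 2 * x) * (∑ n ∈ range k, a k n * (n : ℝ) * x ^ (n - 1))
      + (k : ℝ) * ((k : ℝ) - 1) * (∑ n ∈ range k, a k n * x ^ n) = 0 := by
  obtain ⟨K0, rfl⟩ : ∃ K0, k = K0 + 1 := ⟨k - 1, by omega⟩
  rw [L_poly]
  have h1 : ∀ n ∈ range K0,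
      (a (K0 + 1) (n + 1) * ((n : ℝ) + 1) ^ 2
        + a (K0 + 1) n * (((K0 + 1 : ℕ) : ℝ) * (((K0 + 1 : ℕ) : ℝ) - 1)
          - (n : ℝ) * ((n : ℝ) + 1))) * x ^ n = 0 := by
    intro n hn
    have := a_succ (K0 + 1) n (by simpa using Finset.mem_range.1 hn)
    have hz : a (K0 + 1) (n + 1) * ((n : ℝ) + 1) ^ 2
        + a (K0 + 1) n * (((K0 + 1 : ℕ) : ℝ) * (((K0 + 1 : ℕ) : ℝ) - 1)
          - (n : ℝ) * ((n : ℝ) + 1)) = 0 := by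
      push_cast at this ⊢
      linarith [this]
    rw [hz, zero_mul]
  rw [Finset.sum_congr rfl h1, Finset.sum_const_zero]
  have hz2 : ((K0 + 1 : ℕ) : ℝ) * (((K0 + 1 : ℕ) : ℝ) - 1)
      - (K0 : ℝ) * ((K0 : ℝ) + 1) = 0 := by push_cast; ring
  rw [hz2]
  ring

lemma L_w (k : ℕ) (hk : 1 ≤ k) (x : ℝ) :
    x * (1 - x) * (∑ n ∈ range k, (a k n * d k n) * (n : ℝ) * ((n - 1 : ℕ) : ℝ) * x ^ (n - 1 - 1))
      + (1 - 2 * x) * (∑ n ∈ range k, (a k n * d k n) * (n : ℝ) * x ^ (n - 1))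
      + (k : ℝ) * ((k : ℝ) - 1) * (∑ n ∈ range k, (a k n * d k n) * x ^ n)
    = (∑ n ∈ range k, a k n * x ^ n)
      - 2 * (1 - x) * (∑ n ∈ range k, a k n * (n : ℝ) * x ^ (n - 1))
      + (-1 : ℝ) ^ k * (k : ℝ) ^ 2 * b k 0 * x ^ (k - 1) := by
  obtain ⟨K0, rfl⟩ : ∃ K0, k = K0 + 1 := ⟨k - 1, by omega⟩
  rw [L_poly]
  -- rewrite LHS brackets via c_succ
  have h1 : ∀ n ∈ range K0,
      ((a (K0 + 1) (n + 1) * d (K0 + 1) (n + 1)) * ((n : ℝ) + 1) ^ 2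
        + (a (K0 + 1) n * d (K0 + 1) n) * (((K0 + 1 : ℕ) : ℝ) * (((K0 + 1 : ℕ) : ℝ) - 1)
          - (n : ℝ) * ((n : ℝ) + 1))) * x ^ n
      = ((2 * (n : ℝ) + 1) * a (K0 + 1) n - 2 * ((n : ℝ) + 1) * a (K0 + 1) (n + 1)) * x ^ n := by
    intro n hn
    have hcs := c_succ (K0 + 1) n (by simpa using Finset.mem_range.1 hn)
    push_cast at hcs ⊢
    have : a (K0 + 1) (n + 1) * d (K0 + 1) (n + 1) * ((n : ℝ) + 1) ^ 2
        + a (K0 + 1) n * d (K0 + 1) n * (((K0 : ℝ) + 1) * (((K0 : ℝ) + 1) - 1)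
          - (n : ℝ) * ((n : ℝ) + 1))
        = (2 * (n : ℝ) + 1) * a (K0 + 1) n - 2 * ((n : ℝ) + 1) * a (K0 + 1) (n + 1) := by
      linarith [hcs]
    linear_combination x ^ n * this
  rw [Finset.sum_congr rfl h1]
  -- boundary coefficient vanishes
  have hz2 : ((K0 + 1 : ℕ) : ℝ) * (((K0 + 1 : ℕ) : ℝ) - 1)
      - (K0 : ℝ) * ((K0 : ℝ) + 1) = 0 := by push_cast; ring
  rw [hz2]
  -- now the right-hand side
  have h2 : ∑ n ∈ range (K0 + 1), a (K0 + 1) n * (n : ℝ) * x ^ (n - 1)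
      = ∑ n ∈ range K0, a (K0 + 1) (n + 1) * ((n : ℝ) + 1) * x ^ n := by
    rw [Finset.sum_range_succ']
    simp only [Nat.cast_zero, mul_zero, zero_mul, add_zero]
    apply Finset.sum_congr rfl
    intro n _
    rw [Nat.add_sub_cancel]
    push_cast
    ring
  have h3 : ∑ n ∈ range (K0 + 1), a (K0 + 1) n * x ^ n
      = (∑ n ∈ range K0, a (K0 + 1) n * x ^ n) + a (K0 + 1) K0 * x ^ K0 :=
    Finset.sum_range_succ _ _
  rw [h2, h3]
  have hbd := boundary (K0 + 1) (by omega)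
  rw [show K0 + 1 - 1 = K0 by omega] at hbd ⊢
  have hsum : ∑ n ∈ range K0,
      ((2 * (n : ℝ) + 1) * a (K0 + 1) n - 2 * ((n : ℝ) + 1) * a (K0 + 1) (n + 1)) * x ^ n
      = (∑ n ∈ range K0, a (K0 + 1) n * x ^ n)
        + 2 * (∑ n ∈ range K0, a (K0 + 1) n * (n : ℝ) * x ^ n)
        - 2 * (∑ n ∈ range K0, a (K0 + 1) (n + 1) * ((n : ℝ) + 1) * x ^ n) := by
    rw [Finset.mul_sum, Finset.mul_sum, ← Finset.sum_add_distrib, ← Finset.sum_sub_distrib]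
    apply Finset.sum_congr rfl
    intro n _
    ring
  rw [hsum]
  have h4 : x * (∑ n ∈ range K0, a (K0 + 1) (n + 1) * ((n : ℝ) + 1) * x ^ n)
      = (∑ n ∈ range K0, a (K0 + 1) n * (n : ℝ) * x ^ n)
        + a (K0 + 1) K0 * (K0 : ℝ) * x ^ K0 := by
    rw [Finset.mul_sum,
      ← Finset.sum_range_succ (fun n => a (K0 + 1) n * (n : ℝ) * x ^ n) K0,
      Finset.sum_range_succ']
    norm_num
    apply Finset.sum_congr rfl
    intro n _
    push_cast
    ring
  push_cast at hbd ⊢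
  linear_combination -2 * h4 - x ^ K0 * hbd

lemma phi_eq (k : ℕ) :
    phi k = fun x => -2 * Real.log x * U k x - 2 * W k x + 2 * (-1 : ℝ) ^ k * G k x := rfl

lemma hasDerivAt_U (k : ℕ) (x : ℝ) : HasDerivAt (fun y => U k y) (U1 k x) x := by
  apply HasDerivAt.fun_sum
  intro n _
  have := (hasDerivAt_pow n x).const_mul (a k n)
  simpa [mul_assoc] using this

lemma hasDerivAt_U1 (k : ℕ) (x : ℝ) : HasDerivAt (fun y => U1 k y) (U2 k x) x := by
  apply HasDerivAt.fun_sum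
  intro n _
  have := (hasDerivAt_pow (n - 1) x).const_mul (a k n * (n : ℝ))
  simpa [mul_assoc] using this

lemma hasDerivAt_W (k : ℕ) (x : ℝ) : HasDerivAt (fun y => W k y) (W1 k x) x := by
  apply HasDerivAt.fun_sum
  intro n _
  have := (hasDerivAt_pow n x).const_mul (a k n * d k n)
  simpa [mul_assoc] using this

lemma hasDerivAt_W1 (k : ℕ) (x : ℝ) : HasDerivAt (fun y => W1 k y) (W2 k x) x := by
  apply HasDerivAt.fun_sum
  intro n _
  have := (hasDerivAt_pow (n - 1) x).const_mul (a k n * d k n * (n : ℝ))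
  simpa [mul_assoc] using this

def phi1 (k : ℕ) (x : ℝ) : ℝ :=
  (-2 * x⁻¹) * U k x + (-2 * Real.log x) * U1 k x - 2 * W1 k x + 2 * (-1 : ℝ) ^ k * G1 k x

def phi2 (k : ℕ) (x : ℝ) : ℝ :=
  2 * (x ^ 2)⁻¹ * U k x - 4 * x⁻¹ * U1 k x - 2 * Real.log x * U2 k x
    - 2 * W2 k x + 2 * (-1 : ℝ) ^ k * G2 k x

lemma hasDerivAt_phi (k : ℕ) (hk : 1 ≤ k) {x : ℝ} (hx : x ∈ Set.Ioo (0 : ℝ) 1) :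
    HasDerivAt (phi k) (phi1 k x) x := by
  obtain ⟨hx0, hx1⟩ := hx
  have hxne : x ≠ 0 := ne_of_gt hx0
  have hxa : |x| < 1 := by rw [abs_of_pos hx0]; exact hx1
  have h1 : HasDerivAt (fun t => -2 * Real.log t * U k t)
      ((-2 * x⁻¹) * U k x + (-2 * Real.log x) * U1 k x) x := by
    have := ((Real.hasDerivAt_log hxne).const_mul (-2)).fun_mul (hasDerivAt_U k x)
    convert this using 1
    try ring
  have h2 := (hasDerivAt_W k x).const_mul (2 : ℝ)
  have h3 := (hasDerivAt_G k hk hxa).const_mul (2 * (-1 : ℝ) ^ k)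
  have H := (h1.sub h2).add h3
  have hval : phi1 k x = ((-2 * x⁻¹) * U k x + (-2 * Real.log x) * U1 k x) - 2 * W1 k x
      + 2 * (-1 : ℝ) ^ k * G1 k x := by rw [phi1]; try ring
  rw [phi_eq, hval]
  exact H

lemma hasDerivAt_phi1 (k : ℕ) (hk : 1 ≤ k) {x : ℝ} (hx : x ∈ Set.Ioo (0 : ℝ) 1) :
    HasDerivAt (phi1 k) (phi2 k x) x := by
  obtain ⟨hx0, hx1⟩ := hx
  have hxne : x ≠ 0 := ne_of_gt hx0
  have hxa : |x| < 1 := by rw [abs_of_pos hx0]; exact hx1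
  have h1 : HasDerivAt (fun t => (-2 * t⁻¹) * U k t)
      ((-2 * -(x ^ 2)⁻¹) * U k x + (-2 * x⁻¹) * U1 k x) x :=
    ((hasDerivAt_inv hxne).const_mul (-2)).mul (hasDerivAt_U k x)
  have h2 : HasDerivAt (fun t => (-2 * Real.log t) * U1 k t)
      ((-2 * x⁻¹) * U1 k x + (-2 * Real.log x) * U2 k x) x := by
    have := ((Real.hasDerivAt_log hxne).const_mul (-2)).fun_mul (hasDerivAt_U1 k x)
    convert this using 1
    try ring
  have h3 := (hasDerivAt_W1 k x).const_mul (2 : ℝ)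
  have h4 := (hasDerivAt_G1 k hk hxa).const_mul (2 * (-1 : ℝ) ^ k)
  have H := (((h1.add h2).sub h3).add h4)
  have hval : phi2 k x = (((-2 * -(x ^ 2)⁻¹) * U k x + (-2 * x⁻¹) * U1 k x)
      + ((-2 * x⁻¹) * U1 k x + (-2 * Real.log x) * U2 k x)) - 2 * W2 k x
      + 2 * (-1 : ℝ) ^ k * G2 k x := by rw [phi2]; try ring
  rw [hval]
  exact H

lemma phi_ode (k : ℕ) (hk : 1 ≤ k) {x : ℝ} (hx : x ∈ Set.Ioo (0 : ℝ) 1) :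
    x * (1 - x) * phi2 k x + (1 - 2 * x) * phi1 k x
      + (k : ℝ) * ((k : ℝ) - 1) * phi k x = 0 := by
  obtain ⟨hx0, hx1⟩ := hx
  have hxne : x ≠ 0 := ne_of_gt hx0
  have hxa : |x| < 1 := by rw [abs_of_pos hx0]; exact hx1
  have EU : x * (1 - x) * U2 k x + (1 - 2 * x) * U1 k x
      + (k : ℝ) * ((k : ℝ) - 1) * U k x = 0 := L_u k hk x
  have EW : x * (1 - x) * W2 k x + (1 - 2 * x) * W1 k x
      + (k : ℝ) * ((k : ℝ) - 1) * W k x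
      = U k x - 2 * (1 - x) * U1 k x
        + (-1 : ℝ) ^ k * (k : ℝ) ^ 2 * b k 0 * x ^ (k - 1) := L_w k hk x
  have EG := LG k hk hxa
  have hz : x * x⁻¹ = 1 := mul_inv_cancel₀ hxne
  have hz2 : x ^ 2 * (x ^ 2)⁻¹ = 1 := mul_inv_cancel₀ (pow_ne_zero 2 hxne)
  rw [phi_eq, phi1, phi2]
  linear_combination (-2 * Real.log x) * EU + (-2) * EW + (2 * (-1 : ℝ) ^ k) * EG
    + (2 * x⁻¹ * (1 - x) * U k x + 2 * U k x - 4 * (1 - x) * U1 k x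
        - 2 * x * x⁻¹ * U k x + 2 * x ^ 2 * x⁻¹ * U k x - 2 * U k x + 2 * x * U k x) * hz
    + (2 * (1 - x) * U k x) * hz2

end SPO

open SPO in
/-- `Y(x) = √(x(1−x))·φ_k(x)` is twice differentiable on `(0,1)` and satisfies
`Y'' + (1/(4x²(1−x)²) + k(k−1)/(x(1−x)))·Y = 0` there. -/
theorem sqrt_mul_phi_ode (k : ℕ) (hk : 1 ≤ k) :
    ∀ x ∈ Set.Ioo (0 : ℝ) 1,
      DifferentiableAt ℝ (fun t => Real.sqrt (t * (1 - t)) * phi k t) x ∧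
      DifferentiableAt ℝ (deriv (fun t => Real.sqrt (t * (1 - t)) * phi k t)) x ∧
      deriv (deriv (fun t => Real.sqrt (t * (1 - t)) * phi k t)) x
        + (1 / (4 * x ^ 2 * (1 - x) ^ 2) + (k : ℝ) * ((k : ℝ) - 1) / (x * (1 - x)))
          * (Real.sqrt (x * (1 - x)) * phi k x) = 0 := by

  have hsd : ∀ y ∈ Set.Ioo (0 : ℝ) 1, HasDerivAt (fun t => Real.sqrt (t * (1 - t)))
      ((1 - 2 * y) / (2 * Real.sqrt (y * (1 - y)))) y := by
    intro y hy
    obtain ⟨hy0, hy1⟩ := hy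
    have hyp : 0 < y * (1 - y) := mul_pos hy0 (by linarith)
    have hinner : HasDerivAt (fun t : ℝ => t * (1 - t)) (1 - 2 * y) y := by
      have := (hasDerivAt_id y).fun_mul ((hasDerivAt_const y (1 : ℝ)).fun_sub (hasDerivAt_id y))
      refine this.congr_deriv ?_
      simp only [id]
      ring
    have houter := (Real.hasDerivAt_sqrt hyp.ne').comp y hinner
    refine houter.congr_deriv ?_
    ring
  set Y : ℝ → ℝ := fun t => Real.sqrt (t * (1 - t)) * phi k t with hY
  set Y1 : ℝ → ℝ := fun y => (1 - 2 * y) / (2 * Real.sqrt (y * (1 - y))) * phi k y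
      + Real.sqrt (y * (1 - y)) * phi1 k y with hY1
  have hYd : ∀ y ∈ Set.Ioo (0 : ℝ) 1, HasDerivAt Y (Y1 y) y := fun y hy =>
    (hsd y hy).mul (hasDerivAt_phi k hk hy)
  intro x hx
  obtain ⟨hx0, hx1⟩ := hx
  have hx : x ∈ Set.Ioo (0 : ℝ) 1 := ⟨hx0, hx1⟩
  have hp : 0 < x * (1 - x) := mul_pos hx0 (by linarith)
  have hs_pos : 0 < Real.sqrt (x * (1 - x)) := Real.sqrt_pos.2 hp
  have hsne : Real.sqrt (x * (1 - x)) ≠ 0 := hs_pos.ne'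
  have hev : deriv Y =ᶠ[nhds x] Y1 := by
    filter_upwards [isOpen_Ioo.mem_nhds hx] with y hy
    exact (hYd y hy).deriv
  -- derivative of Y1
  have hnum : HasDerivAt (fun y : ℝ => 1 - 2 * y) (-2) x := by
    simpa using (hasDerivAt_const x (1 : ℝ)).fun_sub ((hasDerivAt_id x).const_mul (2 : ℝ))
  have hden : HasDerivAt (fun y : ℝ => 2 * Real.sqrt (y * (1 - y)))
      (2 * ((1 - 2 * x) / (2 * Real.sqrt (x * (1 - x))))) x := (hsd x hx).const_mul 2
  have hs1d := hnum.fun_div hden (by positivity)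
  have hY1d := (hs1d.fun_mul (hasDerivAt_phi k hk hx)).fun_add
    ((hsd x hx).fun_mul (hasDerivAt_phi1 k hk hx))
  refine ⟨(hYd x hx).differentiableAt, ?_, ?_⟩
  · exact (hev.differentiableAt_iff).2 hY1d.differentiableAt
  · rw [hev.deriv_eq, hY1d.deriv]
    have hsq : Real.sqrt (x * (1 - x)) ^ 2 = x * (1 - x) := Real.sq_sqrt hp.le
    have hode := phi_ode k hk hx
    set s : ℝ := Real.sqrt (x * (1 - x)) with hs
    have hx1ne : (1 : ℝ) - x ≠ 0 := by linarith
    have hxne : x ≠ 0 := ne_of_gt hx0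
    have hK : (k : ℝ) * ((k : ℝ) - 1) * phi k x
        = -(x * (1 - x) * SPO.phi2 k x) - (1 - 2 * x) * SPO.phi1 k x := by
      linarith [hode]
    have hPs : x * (1 - x) = s ^ 2 := hsq.symm
    have h4 : 4 * x ^ 2 * (1 - x) ^ 2 = 4 * s ^ 4 := by
      rw [show (4:ℝ) * x ^ 2 * (1 - x) ^ 2 = 4 * (x * (1-x))^2 by ring, hPs]; ring
    rw [h4, hPs]
    rw [div_add_div _ _ (by positivity) (by positivity : (s:ℝ)^2 ≠ 0)]
    field_simp
    linear_combination 16 * (s ^ 2 * hK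
      + (phi k x - s ^ 2 * SPO.phi2 k x) * hPs)

end
end

section
/- For every even integer k ≥ 2, the derivative of the polynomial F_k at the point 1/2 equals F_k'(1/2) = (−1)^{k/2} · 4 Γ(1/2) Γ((k+1)/2) / (π Γ(k/2)). -/
noncomputable section

open Finset

/-- The Gauss hypergeometric polynomial `₂F₁(k, 1−k, 1; x)`, written as
`F_k(x) = Σ_{n=0}^{k−1} (−1)^n (Γ(k+n)/(Γ(k−n)·(n!)²)) x^n`. -/
def F (k : ℕ) (x : ℝ) : ℝ :=
  ∑ n ∈ Finset.range k,
    (-1 : ℝ) ^ n * (Real.Gamma ((k : ℝ) + n) /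
      (Real.Gamma ((k : ℝ) - n) * ((Nat.factorial n : ℝ)) ^ 2)) * x ^ n

/-- auxiliary: the coefficient of `F` as a natural number -/
def cc (k n : ℕ) : ℕ := (k + n - 1).choose (2 * n) * (2 * n).choose n

/-- auxiliary: `n`-th term of the derivative of `F k` at `1/2` -/
def T (k n : ℕ) : ℝ := (-1 : ℝ) ^ n * (cc k n : ℝ) * (n * (1 / 2 : ℝ) ^ (n - 1))

/-- auxiliary: the derivative of `F k` at `1/2`, as an explicit sum -/
def S (k : ℕ) : ℝ := ∑ n ∈ Finset.range (k + 2), T k n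

lemma T_zero {k n : ℕ} (h : k ≤ n) : T k n = 0 := by
  rcases Nat.eq_zero_or_pos n with rfl | hn
  · simp [T]
  · have : k + n - 1 < 2 * n := by omega
    simp [T, cc, Nat.choose_eq_zero_of_lt this]

lemma cc_cast (k n : ℕ) (h : n + 1 ≤ k) :
    (cc k n : ℝ) = ((k + n - 1).factorial : ℝ) /
      ((k - n - 1).factorial * (n.factorial : ℝ) ^ 2) := by
  have h1 : 2 * n ≤ k + n - 1 := by omega
  have h2 : n ≤ 2 * n := by omega
  have e1 : k + n - 1 - 2 * n = k - n - 1 := by omega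
  have e2 : 2 * n - n = n := by omega
  rw [cc, Nat.cast_mul, Nat.cast_choose ℝ h1, Nat.cast_choose ℝ h2, e1, e2]
  have f1 : ((2 * n).factorial : ℝ) ≠ 0 := by positivity
  have f2 : ((k - n - 1).factorial : ℝ) ≠ 0 := by positivity
  have f3 : ((n).factorial : ℝ) ≠ 0 := by positivity
  field_simp

lemma F_eq (k : ℕ) (hk : 1 ≤ k) (x : ℝ) :
    F k x = ∑ n ∈ Finset.range k, (-1 : ℝ) ^ n * (cc k n : ℝ) * x ^ n := by
  unfold F
  refine Finset.sum_congr rfl fun n hn => ?_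
  have hn' : n + 1 ≤ k := Finset.mem_range.mp hn
  have e1 : (k : ℝ) + n = ((k + n - 1 : ℕ) : ℝ) + 1 := by
    have : k + n - 1 + 1 = k + n := by omega
    rw [show ((k + n - 1 : ℕ) : ℝ) + 1 = ((k + n - 1 + 1 : ℕ) : ℝ) by push_cast; ring, this]
    push_cast; ring
  have e2 : (k : ℝ) - n = ((k - n - 1 : ℕ) : ℝ) + 1 := by
    have : k - n - 1 + 1 = k - n := by omega
    rw [show ((k - n - 1 : ℕ) : ℝ) + 1 = ((k - n - 1 + 1 : ℕ) : ℝ) by push_cast; ring, this]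
    have : (k - n : ℕ) + n = k := by omega
    rw [show ((k - n : ℕ) : ℝ) = ((k - n + n : ℕ) : ℝ) - n by push_cast; ring, this]
  rw [e1, e2, Real.Gamma_nat_eq_factorial, Real.Gamma_nat_eq_factorial, cc_cast k n hn']

lemma deriv_F (k : ℕ) (hk : 1 ≤ k) :
    deriv (F k) (1 / 2) =
      ∑ n ∈ Finset.range k, (-1 : ℝ) ^ n * (cc k n : ℝ) * (n * (1 / 2 : ℝ) ^ (n - 1)) := by
  have h : HasDerivAt (F k)
      (∑ n ∈ Finset.range k, (-1 : ℝ) ^ n * (cc k n : ℝ) * (n * (1 / 2 : ℝ) ^ (n - 1)))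
      (1 / 2) := by
    have hev : ∀ᶠ x in nhds (1/2 : ℝ), F k x
        = ∑ n ∈ Finset.range k, (-1 : ℝ) ^ n * (cc k n : ℝ) * x ^ n :=
      Filter.Eventually.of_forall (F_eq k hk)
    refine HasDerivAt.congr_of_eventuallyEq ?_ hev
    exact HasDerivAt.fun_sum fun n _ => (hasDerivAt_pow n _).const_mul _
  exact h.deriv

lemma deriv_F_S (k : ℕ) (hk : 1 ≤ k) : deriv (F k) (1 / 2) = S k := by
  rw [deriv_F k hk, S, Finset.sum_range_succ, Finset.sum_range_succ,
      T_zero (show k ≤ k + 1 by omega), T_zero (le_refl k)]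
  simp [T]

lemma gen_id (m j : ℕ) :
    ((m:ℝ)+j+2) * (((m:ℝ)+1) * ((2*m+j+4).choose (2*m+2) : ℝ) * ((2*m+2).choose (m+1) : ℝ))
  + ((m:ℝ)+j+3) * (((m:ℝ)+1) * ((2*m+j+2).choose (2*m+2) : ℝ) * ((2*m+2).choose (m+1) : ℝ))
  = (2*((m:ℝ)+j+2)+1) * (((m:ℝ)+1) * ((2*m+j+3).choose (2*m+2) : ℝ) * ((2*m+2).choose (m+1):ℝ)
      + 2*(m:ℝ)*((2*m+j+2).choose (2*m):ℝ) * ((2*m).choose m : ℝ)) := by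
  have fact_cast2 : ∀ a : ℕ, (((a+2).factorial : ℕ) : ℝ)
      = ((a:ℝ)+2) * ((a:ℝ)+1) * (a.factorial : ℝ) := by
    intro a
    rw [show a+2 = (a+1)+1 from rfl, Nat.factorial_succ, Nat.factorial_succ]
    push_cast; ring
  have fact_cast1 : ∀ a : ℕ, (((a+1).factorial : ℕ) : ℝ) = ((a:ℝ)+1) * (a.factorial : ℝ) := by
    intro a
    rw [Nat.factorial_succ]; push_cast; ring
  rw [Nat.cast_choose ℝ (show 2*m+2 ≤ 2*m+j+4 by omega),
      Nat.cast_choose ℝ (show 2*m+2 ≤ 2*m+j+2 by omega),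
      Nat.cast_choose ℝ (show 2*m+2 ≤ 2*m+j+3 by omega),
      Nat.cast_choose ℝ (show 2*m ≤ 2*m+j+2 by omega),
      Nat.cast_choose ℝ (show m+1 ≤ 2*m+2 by omega),
      Nat.cast_choose ℝ (show m ≤ 2*m by omega)]
  simp only [show 2*m+j+4 - (2*m+2) = j+2 from by omega,
    show 2*m+j+2 - (2*m+2) = j from by omega,
    show 2*m+j+3 - (2*m+2) = j+1 from by omega,
    show 2*m+j+2 - 2*m = j+2 from by omega,
    show 2*m+2 - (m+1) = m+1 from by omega,
    show 2*m - m = m from by omega]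
  rw [show 2*m+j+4 = (2*m+j+2)+2 from by omega, show 2*m+j+3 = (2*m+j+2)+1 from by omega,
      show 2*m+2 = (2*m)+2 from by omega]
  rw [fact_cast2 (2*m+j+2), fact_cast1 (2*m+j+2), fact_cast2 (2*m), fact_cast2 j,
      fact_cast1 j, fact_cast1 m]
  have h1 : ((2*m+j+2).factorial : ℝ) ≠ 0 := by positivity
  have h2 : ((2*m).factorial : ℝ) ≠ 0 := by positivity
  have h3 : ((j).factorial : ℝ) ≠ 0 := by positivity
  have h4 : ((m).factorial : ℝ) ≠ 0 := by positivity
  push_cast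
  field_simp
  ring

lemma central (m : ℕ) :
    ((m:ℝ)+1) * ((2*m+2).choose (m+1) : ℝ) = 2*(2*(m:ℝ)+1) * ((2*m).choose m : ℝ) := by
  have h := Nat.succ_mul_centralBinom_succ m
  unfold Nat.centralBinom at h
  have h2 : (m+1) * ((2*m+2).choose (m+1)) = 2*(2*m+1) * ((2*m).choose m) := by
    rw [show 2*m+2 = 2*(m+1) by ring]; exact h
  exact_mod_cast h2

lemma pow_half (m : ℕ) : (m:ℝ) * (1/2 : ℝ)^(m-1) = 2*(m:ℝ)*(1/2:ℝ)^m := by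
  cases m with
  | zero => simp
  | succ i => rw [show i+1-1 = i from rfl, pow_succ]; push_cast; ring

lemma T_succ (k m : ℕ) :
    T k (m+1) = (-1:ℝ)^m * (-1) * ((k+m).choose (2*m+2) : ℝ) * ((2*m+2).choose (m+1) : ℝ)
      * (((m:ℝ)+1) * (1/2:ℝ)^m) := by
  unfold T cc
  rw [show k + (m+1) - 1 = k+m by omega, show 2*(m+1) = 2*m+2 by ring,
      show m+1-1 = m from rfl, pow_succ]
  push_cast; ring

lemma T_eq2 (k m : ℕ) :
    T k m = (-1:ℝ)^m * ((k+m-1).choose (2*m) : ℝ) * ((2*m).choose m : ℝ)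
      * (2*(m:ℝ)*(1/2:ℝ)^m) := by
  unfold T cc
  rw [pow_half]
  push_cast
  ring

lemma key (k : ℕ) (hk : 1 ≤ k) (n : ℕ) :
    (k:ℝ) * T (k+2) n + ((k:ℝ)+1) * T k n
      = (2*(k:ℝ)+1) * (T (k+1) n - T (k+1) (n-1)) := by
  cases n with
  | zero => simp [T]
  | succ m =>
    rw [T_succ (k+2) m, T_succ k m, T_succ (k+1) m,
        show m+1-1 = m from rfl, T_eq2 (k+1) m,
        show k+1+m-1 = k+m by omega]
    by_cases h1 : m + 2 ≤ k
    · obtain ⟨j, rfl⟩ : ∃ j, k = m+2+j := ⟨k - (m+2), by omega⟩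
      rw [show m+2+j+2+m = 2*m+j+4 by ring, show m+2+j+m = 2*m+j+2 by ring,
          show m+2+j+1+m = 2*m+j+3 by ring]
      push_cast
      linear_combination (-(-1:ℝ)^m * (1/2:ℝ)^m) * gen_id m j
    · by_cases h2 : k = m+1
      · subst h2
        rw [show m+1+2+m = (2*m+2)+1 by ring, show m+1+m = 2*m+1 by ring,
            show m+1+1+m = 2*m+2 by ring]
        rw [Nat.choose_succ_self_right,
            Nat.choose_eq_zero_of_lt (show 2*m+1 < 2*m+2 by omega),
            Nat.choose_self, show 2*m+1 = (2*m)+1 from rfl, Nat.choose_succ_self_right]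
        have hc := central m
        push_cast
        linear_combination (-(-1:ℝ)^m * (1/2:ℝ)^m * (2*(m:ℝ)+3) * m) * hc
      · by_cases h3 : k = m
        · subst h3
          rw [show k+2+k = 2*k+2 by ring, show k+k = 2*k by ring,
              show k+1+k = (2*k)+1 by ring]
          rw [Nat.choose_self, Nat.choose_eq_zero_of_lt (show 2*k < 2*k+2 by omega),
              Nat.choose_eq_zero_of_lt (show 2*k+1 < 2*k+2 by omega), Nat.choose_self]
          have hc := central k
          push_cast
          linear_combination (-(-1:ℝ)^k * (1/2:ℝ)^k * (k:ℝ)) * hc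
        · rw [Nat.choose_eq_zero_of_lt (show k+2+m < 2*m+2 by omega),
              Nat.choose_eq_zero_of_lt (show k+m < 2*m+2 by omega),
              Nat.choose_eq_zero_of_lt (show k+1+m < 2*m+2 by omega),
              Nat.choose_eq_zero_of_lt (show k+m < 2*m by omega)]
          push_cast; ring

lemma S_rec (k : ℕ) (hk : 1 ≤ k) :
    (k:ℝ) * S (k+2) + ((k:ℝ)+1) * S k = 0 := by
  have hSk : S k = ∑ n ∈ Finset.range (k+4), T k n := by
    rw [show k+4 = (k+2)+1+1 by ring, Finset.sum_range_succ, Finset.sum_range_succ,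
        T_zero (show k ≤ k+2+1 by omega), T_zero (show k ≤ k+2 by omega), S]
    ring
  have hS2 : S (k+2) = ∑ n ∈ Finset.range (k+4), T (k+2) n := by
    rw [S]
  rw [hSk, hS2, Finset.mul_sum, Finset.mul_sum, ← Finset.sum_add_distrib]
  have : ∀ n ∈ Finset.range (k+4), (k:ℝ) * T (k+2) n + ((k:ℝ)+1) * T k n
      = (2*(k:ℝ)+1) * (T (k+1) n - T (k+1) (n-1)) := fun n _ => key k hk n
  rw [Finset.sum_congr rfl this, ← Finset.mul_sum]
  have htel : ∑ n ∈ Finset.range (k+4), (T (k+1) n - T (k+1) (n-1)) = 0 := by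
    rw [show k+4 = (k+3)+1 by ring, Finset.sum_range_succ']
    have h1 : ∑ i ∈ Finset.range (k+3), (T (k+1) (i+1) - T (k+1) (i+1-1))
        = T (k+1) (k+3) - T (k+1) 0 := by
      simp only [show ∀ i : ℕ, i+1-1 = i from fun i => rfl]
      exact Finset.sum_range_sub (fun i => T (k+1) i) (k+3)
    rw [h1, T_zero (show k+1 ≤ k+3 by omega)]
    simp [T]
  rw [htel, mul_zero]

lemma S_val (j : ℕ) : S (2*j+2) = (-1:ℝ)^(j+1) *
    (4 * Real.Gamma (1/2) * Real.Gamma ((2*(j:ℝ)+3)/2)) /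
      (Real.pi * Real.Gamma ((j:ℝ)+1)) := by
  induction j with
  | zero =>
    have hS : S 2 = -2 := by
      have : cc 2 1 = 2 := by decide
      simp [S, Finset.sum_range_succ, T, cc]
      norm_num [Nat.choose]
    rw [hS]
    push_cast
    have h32 : Real.Gamma ((2*(0:ℝ)+3)/2) = (1/2) * Real.Gamma (1/2) := by
      rw [show (2*(0:ℝ)+3)/2 = 1/2 + 1 by norm_num, Real.Gamma_add_one (by norm_num)]
    have h1 : Real.Gamma ((0:ℝ)+1) = 1 := by
      norm_num [Real.Gamma_one]
    rw [h32, h1, Real.Gamma_one_half_eq]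
    have : Real.sqrt Real.pi * Real.sqrt Real.pi = Real.pi :=
      Real.mul_self_sqrt Real.pi_pos.le
    field_simp
    nlinarith [this, Real.pi_pos]
  | succ j ih =>
    have hrec := S_rec (2*j+2) (by omega)
    have ha : (2*(j:ℝ)+2) ≠ 0 := by positivity
    push_cast at hrec
    have hS : S ((2*j+2)+2) = -(2*(j:ℝ)+3) * S (2*j+2) / (2*(j:ℝ)+2) := by
      rw [eq_div_iff ha]
      linear_combination hrec
    rw [show 2*(j+1)+2 = (2*j+2)+2 by ring, hS, ih]
    have hG1 : Real.Gamma ((2*((j:ℝ)+1)+3)/2) = ((2*(j:ℝ)+3)/2) * Real.Gamma ((2*(j:ℝ)+3)/2) := by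
      rw [show (2*((j:ℝ)+1)+3)/2 = (2*(j:ℝ)+3)/2 + 1 by ring,
          Real.Gamma_add_one (by positivity)]
    have hG2 : Real.Gamma (((j:ℝ)+1)+1) = ((j:ℝ)+1) * Real.Gamma ((j:ℝ)+1) := by
      rw [Real.Gamma_add_one (by positivity)]
    push_cast
    rw [hG1, hG2]
    have hπ : Real.pi ≠ 0 := Real.pi_ne_zero
    have hΓ : Real.Gamma ((j:ℝ)+1) ≠ 0 := (Real.Gamma_pos_of_pos (by positivity)).ne'
    have hj1 : ((j:ℝ)+1) ≠ 0 := by positivity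
    rw [pow_succ]
    field_simp
    ring

/-- for every even `k ≥ 2`,
`F_k'(1/2) = (−1)^{k/2}·4Γ(1/2)Γ((k+1)/2)/(π Γ(k/2))`. -/
theorem deriv_F_at_half (k : ℕ) (hk : 2 ≤ k) (hke : Even k) :
    deriv (F k) (1 / 2) = (-1 : ℝ) ^ (k / 2) *
      (4 * Real.Gamma (1 / 2) * Real.Gamma (((k : ℝ) + 1) / 2)) /
        (Real.pi * Real.Gamma ((k : ℝ) / 2)) := by
  obtain ⟨j, rfl⟩ : ∃ j, k = 2*j+2 := ⟨k/2 - 1, by have := Nat.even_iff.mp hke; omega⟩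
  rw [deriv_F_S _ (by omega), S_val j]
  rw [show (2*j+2)/2 = j+1 by omega]
  rw [show ((2*j+2 : ℕ) : ℝ) = 2*(j:ℝ)+2 by push_cast; ring]
  rw [show (2*(j:ℝ)+2+1)/2 = (2*(j:ℝ)+3)/2 by ring,
      show (2*(j:ℝ)+2)/2 = (j:ℝ)+1 by ring]

end
end

section
/- For every even integer k ≥ 2 and every real x, one has F_k(x) = −(−1)^{k/2} · (2 Γ(1/2) Γ((k+1)/2) / (π Γ(k/2))) · (1−2x) · Σ_{n=0}^{k/2−1} (−1)^n · binom(k/2−1, n) · (Γ(k/2+1/2+n) Γ(3/2) / (Γ(k/2+1/2) Γ(3/2+n))) · (1−2x)^{2n}. -/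
noncomputable section

open Finset

section Auxiliary

open Polynomial in
/-- Key single-sum binomial identity, obtained by extracting the coefficient of `X^(K+m)`
in the two expansions of `((1+X)^2 - 1)^K = X^K * (X+2)^K`. -/
lemma F_fact_idB (K m : ℕ) :
    ∑ j ∈ range (K+1), (-1:ℝ)^j * (K.choose j) * ((2*K-2*j).choose (K+m)) =
      2^(K-m) * (K.choose m) := by
  have hC : (Polynomial.C (2:ℝ)) = 2 := map_ofNat Polynomial.C 2
  have hfac : ((1:ℝ[X]) + X)^2 - 1 = X * (X + Polynomial.C 2) := by rw [hC]; ring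
  have hpoly : (((1:ℝ[X]) + X)^2 - 1)^K = X^K * (X + Polynomial.C 2)^K := by
    rw [hfac, mul_pow]
  have hdef : (((1:ℝ[X]) + X)^2 - 1)^K =
      ∑ j ∈ range (K+1), Polynomial.C ((-1:ℝ)^j * (K.choose j)) * ((1:ℝ[X]) + X)^(2*K-2*j) := by
    rw [sub_eq_add_neg, add_pow, ← Finset.sum_range_reflect]
    refine Finset.sum_congr rfl fun j hj => ?_
    have hjK : j ≤ K := by simpa using Nat.lt_succ_iff.mp (Finset.mem_range.mp hj)
    simp only [Nat.add_sub_cancel]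
    have h1 : K - (K - j) = j := by omega
    have h2 : 2*(K-j) = 2*K - 2*j := by omega
    rw [h1, ← pow_mul, h2, Nat.choose_symm hjK]
    simp only [map_mul, map_pow, map_neg, map_one, Polynomial.C_eq_natCast]
    ring
  have key := congrArg (fun p => Polynomial.coeff p (K+m)) (hdef.symm.trans hpoly)
  rw [Polynomial.finset_sum_coeff] at key
  simp only [Polynomial.coeff_C_mul, Polynomial.coeff_one_add_X_pow] at key
  rw [Polynomial.coeff_X_pow_mul', if_pos (Nat.le_add_right K m), Nat.add_sub_cancel_left,
    Polynomial.coeff_X_add_C_pow] at key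
  simpa [mul_assoc, mul_comm, mul_left_comm] using key

/-- Gamma at half-integers: `Γ(n + 1/2) = (2n)!·√π / (4^n·n!)`. -/
lemma F_fact_gammaHalf (n : ℕ) : Real.Gamma ((n : ℝ) + 1/2) =
    (Nat.factorial (2*n) : ℝ) * Real.sqrt Real.pi / (4^n * Nat.factorial n) := by
  induction n with
  | zero => simpa using Real.Gamma_one_half_eq
  | succ m ih =>
      have h0 : ((m : ℝ) + 1/2) ≠ 0 := by positivity
      have : ((m+1 : ℕ) : ℝ) + 1/2 = ((m : ℝ) + 1/2) + 1 := by push_cast; ring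
      rw [this, Real.Gamma_add_one h0, ih]
      have h1 : (2*(m+1)) = (2*m+1)+1 := by ring
      rw [h1, Nat.factorial_succ, Nat.factorial_succ, Nat.factorial_succ]
      push_cast
      have h4 : (4:ℝ)^(m+1) = 4 * 4^m := by ring
      rw [h4]
      field_simp
      ring

/-- `F k x` in binomial-coefficient form. -/
lemma F_fact_stepA (k : ℕ) (hk : 1 ≤ k) (x : ℝ) :
    F k x = ∑ m ∈ range k,
      (-1:ℝ)^m * ((k-1).choose m) * ((k-1+m).choose m) * x^m := by
  unfold F
  refine Finset.sum_congr rfl fun n hn => ?_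
  have hnk : n ≤ k - 1 := by have := Finset.mem_range.mp hn; omega
  have e1 : (k : ℝ) + n = ((k - 1 + n : ℕ) : ℝ) + 1 := by
    have : (k - 1 + n : ℕ) = k + n - 1 := by omega
    rw [this]; push_cast [Nat.cast_sub (by omega : 1 ≤ k + n)]; ring
  have e2 : (k : ℝ) - n = ((k - 1 - n : ℕ) : ℝ) + 1 := by
    push_cast [Nat.cast_sub (by omega : n ≤ k - 1), Nat.cast_sub (by omega : 1 ≤ k)]
    ring
  rw [e1, e2, Real.Gamma_nat_eq_factorial, Real.Gamma_nat_eq_factorial]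
  have c1 : ((k-1).choose n : ℝ) =
      (Nat.factorial (k-1)) / (Nat.factorial n * Nat.factorial (k-1-n)) :=
    Nat.cast_choose ℝ hnk
  have c2 : ((k-1+n).choose n : ℝ) =
      (Nat.factorial (k-1+n)) / (Nat.factorial n * Nat.factorial (k-1)) := by
    rw [Nat.cast_choose ℝ (Nat.le_add_left n (k-1))]
    rw [Nat.add_sub_cancel]
  rw [c1, c2]
  have f1 : (Nat.factorial n : ℝ) ≠ 0 := Nat.cast_ne_zero.mpr (Nat.factorial_ne_zero n)
  have f2 : (Nat.factorial (k-1) : ℝ) ≠ 0 := Nat.cast_ne_zero.mpr (Nat.factorial_ne_zero _)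
  have f3 : (Nat.factorial (k-1-n) : ℝ) ≠ 0 := Nat.cast_ne_zero.mpr (Nat.factorial_ne_zero _)
  field_simp

/-- The central polynomial identity: the odd-degree monomial expansion of the Legendre
polynomial `P_{2s+1}(1-2x)` equals `2^(2s+1)` times its shifted-hypergeometric expansion. -/
lemma F_fact_stepC (s : ℕ) (x : ℝ) :
    ∑ j ∈ range (s+1), (-1:ℝ)^j * ((2*s+1).choose j) *
        (((2*(2*s+1)-2*j).choose (2*s+1) : ℕ)) * (1-2*x)^(2*s+1-2*j)
    = 2^(2*s+1) * ∑ m ∈ range (2*s+2), (-1:ℝ)^m * ((2*s+1).choose m) *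
        ((2*s+1+m).choose m) * x^m := by
  set K := 2*s+1 with hK
  have hb : ∀ N : ℕ, N ≤ K → (1-2*x)^N = ∑ m ∈ range (K+1), ((N.choose m : ℝ)) * (-2*x)^m := by
    intro N hN
    rw [show (1:ℝ)-2*x = (-2*x) + 1 by ring, add_pow]
    simp only [one_pow, mul_one]
    rw [← Finset.sum_subset (Finset.range_subset_range.mpr (by omega : N+1 ≤ K+1))]
    · exact Finset.sum_congr rfl fun m _ => by ring
    · intro m _ hm
      have hlt : N < m := by
        simp only [Finset.mem_range, not_lt] at hm
        omega
      simp [Nat.choose_eq_zero_of_lt hlt]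
  calc ∑ j ∈ range (s+1), (-1:ℝ)^j * (K.choose j) * ((2*K-2*j).choose K) * (1-2*x)^(K-2*j)
      = ∑ j ∈ range (s+1), ∑ m ∈ range (K+1),
          (-1:ℝ)^j * (K.choose j) * ((2*K-2*j).choose K) * (((K-2*j).choose m : ℝ) * (-2*x)^m) := by
        refine Finset.sum_congr rfl fun j hj => ?_
        rw [hb (K-2*j) (by omega), Finset.mul_sum]
    _ = ∑ m ∈ range (K+1), ∑ j ∈ range (s+1),
          (-1:ℝ)^j * (K.choose j) * ((2*K-2*j).choose K) * (((K-2*j).choose m : ℝ) * (-2*x)^m) :=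
        Finset.sum_comm
    _ = ∑ m ∈ range (K+1), ((K+m).choose m : ℝ) * (-2*x)^m *
          ∑ j ∈ range (K+1), (-1:ℝ)^j * (K.choose j) * ((2*K-2*j).choose (K+m)) := by
        refine Finset.sum_congr rfl fun m _ => ?_
        rw [Finset.mul_sum,
          ← Finset.sum_subset (Finset.range_subset_range.mpr (show s+1 ≤ K+1 by omega))
            (fun j _ hj => by
              have hjs : s+1 ≤ j := by simpa [Finset.mem_range, not_lt] using hj
              have hz : 2*K-2*j < K+m := by omega
              simp [Nat.choose_eq_zero_of_lt hz])]
        refine Finset.sum_congr rfl fun j hj => ?_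
        have hjs : j ≤ s := by have := Finset.mem_range.mp hj; omega
        have hprod : ((2*K-2*j).choose K : ℕ) * ((K-2*j).choose m)
            = (2*K-2*j).choose (K+m) * ((K+m).choose m) := by
          by_cases hcase : K + m ≤ 2*K - 2*j
          · have h1 := Nat.choose_mul (n := 2*K-2*j) (k := K+m) (s := K)
              (Nat.le_add_right K m)
            have h2 : 2*K-2*j - K = K - 2*j := by omega
            have h3 : K+m - K = m := by omega
            rw [h2, h3] at h1
            rw [← h1, Nat.choose_symm_add]
          · have hm1 : K - 2*j < m := by omega
            have hm2 : 2*K-2*j < K + m := by omega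
            simp [Nat.choose_eq_zero_of_lt hm1, Nat.choose_eq_zero_of_lt hm2]
        have hprodR : ((2*K-2*j).choose K : ℝ) * ((K-2*j).choose m)
            = ((2*K-2*j).choose (K+m) : ℝ) * ((K+m).choose m) := by
          exact_mod_cast congrArg (Nat.cast : ℕ → ℝ) hprod
        linear_combination ((-1:ℝ)^j * (K.choose j) * (-2*x)^m) * hprodR
    _ = 2^(2*s+1) * ∑ m ∈ range (2*s+2), (-1:ℝ)^m * ((2*s+1).choose m) *
        ((2*s+1+m).choose m) * x^m := by
        rw [Finset.mul_sum]
        refine Finset.sum_congr rfl fun m hm => ?_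
        have hmK : m ≤ K := by have := Finset.mem_range.mp hm; omega
        rw [F_fact_idB K m]
        have h2 : (2:ℝ)^(K-m) * 2^m = 2^K := by rw [← pow_add]; congr 1; omega
        have : (-2*x)^m = (-1)^m * 2^m * x^m := by
          rw [show (-2*x) = (-1)*(2*x) by ring, mul_pow, mul_pow]; ring
        rw [this, ← h2]
        ring

/-- The scalar identity between the Gamma-factor coefficients and the
binomial coefficients of the monomial expansion. -/
lemma F_fact_coeffId (s n : ℕ) (hn : n ≤ s) :
    -(-1:ℝ)^(s+1) * (2 * Real.sqrt Real.pi *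
        ((2*(s+1)).factorial * Real.sqrt Real.pi / (4^(s+1) * (s+1).factorial)) /
        (Real.pi * s.factorial)) *
      ((-1:ℝ)^n * (s.choose n) *
        (((2*(s+1+n)).factorial * Real.sqrt Real.pi / (4^(s+1+n) * (s+1+n).factorial)) *
            (Real.sqrt Real.pi / 2) /
          (((2*(s+1)).factorial * Real.sqrt Real.pi / (4^(s+1) * (s+1).factorial)) *
            ((2*(n+1)).factorial * Real.sqrt Real.pi / (4^(n+1) * (n+1).factorial)))))
    = (-1:ℝ)^(s-n) * ((2*s+1).choose (s-n)) *
        ((2*(2*s+1)-2*(s-n)).choose (2*s+1)) / 2^(2*s+1) := by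
  obtain ⟨a, rfl⟩ : ∃ a, s = n + a := ⟨s - n, by omega⟩
  have h1 : n + a - n = a := by omega
  have h2 : 2*(2*(n+a)+1) - 2*a = 2*(n+a)+2*n+2 := by omega
  rw [h1, h2]
  rw [Nat.cast_choose ℝ (show n ≤ n + a by omega),
      Nat.cast_choose ℝ (show a ≤ 2*(n+a)+1 by omega),
      Nat.cast_choose ℝ (show 2*(n+a)+1 ≤ 2*(n+a)+2*n+2 by omega)]
  have h3 : n + a - n = a := by omega
  have h4 : 2*(n+a)+1 - a = (n+a) + n + 1 := by omega
  have h5 : 2*(n+a)+2*n+2 - (2*(n+a)+1) = 2*n + 1 := by omega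
  rw [h3, h4, h5]
  have e1 : (2*(n+a+1)) = (2*(n+a)+1)+1 := by ring
  have e2 : (2*(n+a+1+n)) = (2*(n+a)+2*n+2) := by ring
  have e3 : (2*(n+1)) = (2*n+1)+1 := by ring
  have e4 : (n+a+1+n) = ((n+a)+n+1) := by ring
  rw [e1, e2, e3, e4, Nat.factorial_succ ((2*(n+a))+1), Nat.factorial_succ (2*n+1),
      Nat.factorial_succ (n+a), Nat.factorial_succ n]
  have hππ : Real.sqrt Real.pi * Real.sqrt Real.pi = Real.pi :=
    Real.mul_self_sqrt Real.pi_pos.le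
  set q := Real.sqrt Real.pi with hqdef
  rw [show Real.pi = q * q from hππ.symm]
  have p4 : ∀ t : ℕ, (4:ℝ)^t = 2^t * 2^t := by
    intro t; rw [show (4:ℝ) = 2*2 by norm_num, mul_pow]
  rw [p4, p4, p4]
  have hq : q ≠ 0 := ne_of_gt (Real.sqrt_pos.mpr Real.pi_pos)
  have hf : ∀ t : ℕ, (t.factorial : ℝ) ≠ 0 :=
    fun t => Nat.cast_ne_zero.mpr (Nat.factorial_ne_zero t)
  have h2e : (2:ℝ)^(2*(n+a)+1) = 2^(n+a) * 2^(n+a) * 2 := by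
    rw [pow_succ, two_mul, pow_add]
  have h2s : (2:ℝ)^(n+a+1) = 2^(n+a) * 2 := by rw [pow_succ]
  have h2sn : (2:ℝ)^(n+a+n+1) = 2^(n+a) * 2^n * 2 := by
    rw [pow_succ, pow_add]
  have h2n : (2:ℝ)^(n+1) = 2^n * 2 := by rw [pow_succ]
  rw [h2e, h2s, h2sn, h2n]
  field_simp
  ring_nf
  simp only [pow_mul', neg_one_sq, one_pow]
  ring_nf
  push_cast
  ring

end Auxiliary

/-- for every even `k ≥ 2` and real `x`,
`F_k(x) = −(−1)^{k/2}·(2Γ(1/2)Γ((k+1)/2)/(πΓ(k/2)))·(1−2x)·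
  Σ_{n=0}^{k/2−1} (−1)^n binom(k/2−1,n) (Γ(k/2+1/2+n)Γ(3/2)/(Γ(k/2+1/2)Γ(3/2+n))) (1−2x)^{2n}`. -/
theorem F_factorization (k : ℕ) (hk : 2 ≤ k) (hke : Even k) (x : ℝ) :
    F k x = -(-1 : ℝ) ^ (k / 2) *
      (2 * Real.Gamma (1 / 2) * Real.Gamma (((k : ℝ) + 1) / 2) /
        (Real.pi * Real.Gamma ((k : ℝ) / 2))) * (1 - 2 * x) *
      ∑ n ∈ Finset.range (k / 2),
        (-1 : ℝ) ^ n * (Nat.choose (k / 2 - 1) n : ℝ) *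
          (Real.Gamma ((k : ℝ) / 2 + 1 / 2 + n) * Real.Gamma (3 / 2) /
            (Real.Gamma ((k : ℝ) / 2 + 1 / 2) * Real.Gamma ((3 : ℝ) / 2 + n))) *
          (1 - 2 * x) ^ (2 * n) := by
  obtain ⟨s, rfl⟩ : ∃ s, k = 2*s+2 := by
    obtain ⟨t, ht⟩ := hke
    exact ⟨t-1, by omega⟩
  have hd2 : (2*s+2)/2 = s+1 := by omega
  simp only [hd2, Nat.add_sub_cancel]
  -- rewrite the Gamma factors
  rw [Real.Gamma_one_half_eq,
    show (((2*s+2:ℕ):ℝ)+1)/2 = ((s+1:ℕ):ℝ)+1/2 by push_cast; ring,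
    F_fact_gammaHalf (s+1),
    show ((2*s+2:ℕ):ℝ)/2 = ((s:ℕ):ℝ)+1 by push_cast; ring,
    Real.Gamma_nat_eq_factorial]
  have g32 : Real.Gamma (3/2 : ℝ) = Real.sqrt Real.pi / 2 := by
    rw [show (3/2:ℝ) = ((1:ℕ):ℝ)+1/2 by norm_num, F_fact_gammaHalf]
    norm_num [Nat.factorial]
    ring
  -- left side in binomial form
  rw [F_fact_stepA (2*s+2) (by omega) x]
  simp only [show 2*s+2-1 = 2*s+1 by omega]
  -- use stepC
  have h2ne : ((2:ℝ)^(2*s+1)) ≠ 0 := by positivity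
  have hL : ∑ m ∈ range (2*s+2), (-1:ℝ)^m * ((2*s+1).choose m) *
        ((2*s+1+m).choose m) * x^m
      = (∑ j ∈ range (s+1), (-1:ℝ)^j * ((2*s+1).choose j) *
          (((2*(2*s+1)-2*j).choose (2*s+1) : ℕ)) * (1-2*x)^(2*s+1-2*j)) / 2^(2*s+1) := by
    rw [F_fact_stepC s x, mul_div_cancel_left₀ _ h2ne]
  rw [hL, Finset.sum_div, ← Finset.sum_range_reflect]
  rw [Finset.mul_sum]
  refine Finset.sum_congr rfl fun n hn => ?_
  have hns : n ≤ s := by have := Finset.mem_range.mp hn; omega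
  simp only [Nat.add_sub_cancel]
  rw [show 2*s+1-2*(s-n) = 2*n+1 by omega]
  rw [show (s:ℝ) + 1 + 1/2 + (n:ℝ) = ((s+1+n:ℕ):ℝ)+1/2 by push_cast; ring,
    F_fact_gammaHalf (s+1+n), g32,
    show (s:ℝ) + 1 + 1/2 = ((s+1:ℕ):ℝ)+1/2 by push_cast; ring,
    F_fact_gammaHalf (s+1),
    show (3:ℝ)/2 + (n:ℝ) = ((n+1:ℕ):ℝ)+1/2 by push_cast; ring,
    F_fact_gammaHalf (n+1)]
  rw [mul_div_right_comm, ← F_fact_coeffId s n hns]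
  ring

end
end
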